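/- arXiv:2406.02894 — 10 statements merged into one kernel-verified Lean document; each statement's English description precedes it below -/
import Mathlib

section
/- Let t(x) = x^(-p) * (1-x)^(-q) with p > 0 and q > 0. Then t is strictly convex on the open interval (0,1). -/
/-!
Writing `t = exp ∘ u` with `u x = p • (-log x) + q • (-log (1 - x))`, strict convexity of `t`
follows from that of `u` (a positive combination of the strictly convex `-log`, composed with
`x ↦ x` and `x ↦ 1 - x`), since `exp` is convex and strictly increasing.
-/

open Real Set Function

section

variable {𝕜 E F β : Type*}

theorem StrictConvexOn.const_smul [CommSemiring 𝕜] [PartialOrder 𝕜] [AddCommMonoid E]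
    [AddCommMonoid β] [PartialOrder β] [SMul 𝕜 E] [Module 𝕜 β] [PosSMulStrictMono 𝕜 β]
    {s : Set E} {f : E → β} {c : 𝕜} (hc : 0 < c) (hf : StrictConvexOn 𝕜 s f) :
    StrictConvexOn 𝕜 s fun x => c • f x :=
  ⟨hf.1, fun x hx y hy hxy a b ha hb hab =>
    calc
      c • f (a • x + b • y) < c • (a • f x + b • f y) :=
        smul_lt_smul_of_pos_left (hf.2 hx hy hxy ha hb hab) hc
      _ = a • c • f x + b • c • f y := by rw [smul_add, smul_comm c, smul_comm c]⟩

theorem StrictConvexOn.comp_affineMap [Field 𝕜] [LinearOrder 𝕜] [AddCommGroup E]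
    [AddCommGroup F] [Module 𝕜 E] [Module 𝕜 F] [AddCommMonoid β] [PartialOrder β] [SMul 𝕜 β]
    {f : F → β} (g : E →ᵃ[𝕜] F) (hg : Injective g) {s : Set F} (hf : StrictConvexOn 𝕜 s f) :
    StrictConvexOn 𝕜 (g ⁻¹' s) (f ∘ g) :=
  ⟨hf.1.affine_preimage _, fun x hx y hy hxy a b ha hb hab =>
    calc
      (f ∘ g) (a • x + b • y) = f (a • g x + b • g y) := by
        rw [comp_apply, Convex.combo_affine_apply hab]
      _ < a • f (g x) + b • f (g y) := hf.2 hx hy (hg.ne hxy) ha hb hab⟩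

theorem StrictConvexOn.exp [AddCommMonoid E] [Module ℝ E] {s : Set E} {f : E → ℝ}
    (hf : StrictConvexOn ℝ s f) : StrictConvexOn ℝ s fun x => Real.exp (f x) :=
  ⟨hf.1, fun _ hx _ hy hxy _ _ ha hb hab =>
    (exp_lt_exp.2 (hf.2 hx hy hxy ha hb hab)).trans_le
      (convexOn_exp.2 (mem_univ _) (mem_univ _) ha.le hb.le hab)⟩

end

theorem strictConvexOn_neg_log_one_sub : StrictConvexOn ℝ (Iio 1) fun x => -log (1 - x) := by
  let reflect : ℝ →ᵃ[ℝ] ℝ := AffineMap.const ℝ ℝ 1 - AffineMap.id ℝ ℝ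
  have h := strictConcaveOn_log_Ioi.neg.comp_affineMap reflect fun x y hxy => by
    simpa [reflect] using hxy
  have hs : reflect ⁻¹' Ioi 0 = Iio 1 := by ext; simp [reflect]
  rw [hs] at h
  exact h.congr fun x _ => by simp [reflect]

/-- t(x) = x^(-p) (1-x)^(-q) with p, q > 0 is strictly convex on (0,1). -/
theorem stmt_1 (p q : ℝ) (hp : 0 < p) (hq : 0 < q) :
    StrictConvexOn ℝ (Set.Ioo (0:ℝ) 1)
      (fun x : ℝ => x ^ (-p) * (1 - x) ^ (-q)) := by
  have hlog : StrictConvexOn ℝ (Ioo 0 1) fun x => p • -log x :=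
    (strictConcaveOn_log_Ioi.neg.const_smul hp).subset Ioo_subset_Ioi_self (convex_Ioo 0 1)
  have hlog_one_sub : StrictConvexOn ℝ (Ioo 0 1) fun x => q • -log (1 - x) :=
    (strictConvexOn_neg_log_one_sub.const_smul hq).subset Ioo_subset_Iio_self (convex_Ioo 0 1)
  refine (hlog.add hlog_one_sub).exp.congr fun x ⟨hx0, hx1⟩ => ?_
  simp only [Pi.add_apply, smul_eq_mul]
  rw [rpow_def_of_pos hx0, rpow_def_of_pos (sub_pos.2 hx1), ← Real.exp_add]
  ring_nf
end

section
/- Let f and g be continuous probability densities on [0,1] that are positive on (0,1), and suppose t(x) := f(x)/g(x) is strictly convex on (0,1) with t(x) → ∞ as x → 0⁺ and as x → 1⁻. Then the set {x ∈ (0,1) : f(x) = g(x)} has exactly two elements. -/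
/-!
Since `f` and `g` have the same integral and `f > g` near `0` (where `f / g → ∞`), there is
a point `x₀` with `f x₀ < g x₀`, i.e. `f / g < 1`. The ratio is convex on an open interval, hence
continuous, so the intermediate value theorem gives a solution of `f / g = 1` on each side of
`x₀`; a strictly convex function cannot take the same value at three points.
-/

open Set Filter Topology

lemma exists_mem_Ioo_gt_of_tendsto_nhdsGT {φ : ℝ → ℝ} {a b : ℝ} (hab : a < b)
    (h : Tendsto φ (𝓝[>] a) atTop) (c : ℝ) : ∃ x ∈ Ioo a b, c < φ x :=
  (Eventually.and (Ioo_mem_nhdsGT hab) (h.eventually_gt_atTop c)).exists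

lemma exists_mem_Ioo_gt_of_tendsto_nhdsLT {φ : ℝ → ℝ} {a b : ℝ} (hab : a < b)
    (h : Tendsto φ (𝓝[<] b) atTop) (c : ℝ) : ∃ x ∈ Ioo a b, c < φ x :=
  (Eventually.and (Ioo_mem_nhdsLT hab) (h.eventually_gt_atTop c)).exists

lemma exists_lt_of_integral_eq_of_exists_gt {f g : ℝ → ℝ} {a b : ℝ} (hab : a < b)
    (hfc : ContinuousOn f (Icc a b)) (hgc : ContinuousOn g (Icc a b))
    (hint : ∫ x in a..b, f x = ∫ x in a..b, g x) (hgt : ∃ y ∈ Icc a b, g y < f y) :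
    ∃ x ∈ Ioo a b, f x < g x := by
  by_contra! hle
  have hle_right : g b ≤ f b :=
    ContinuousWithinAt.closure_le (by rw [closure_Ioo hab.ne]; exact right_mem_Icc.2 hab.le)
      ((hgc b (right_mem_Icc.2 hab.le)).mono Ioo_subset_Icc_self)
      ((hfc b (right_mem_Icc.2 hab.le)).mono Ioo_subset_Icc_self) hle
  have hle_Ioc : ∀ x ∈ Ioc a b, g x ≤ f x := fun x hx =>
    hx.2.eq_or_lt.elim (fun h => h ▸ hle_right) fun h => hle x ⟨hx.1, h⟩
  exact (intervalIntegral.integral_lt_integral_of_continuousOn_of_le_of_exists_lt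
    hab hgc hfc hle_Ioc hgt).ne' hint

namespace StrictConvexOn

variable {s : Set ℝ} {φ : ℝ → ℝ} {c : ℝ}

lemma eq_or_eq_of_apply_eq (hφ : StrictConvexOn ℝ s φ) {x y z : ℝ} (hx : x ∈ s) (hy : y ∈ s)
    (hz : z ∈ s) (hxy : x < y) (hφx : φ x = c) (hφy : φ y = c) (hφz : φ z = c) :
    z = x ∨ z = y := by
  have below : ∀ p ∈ s, ∀ q ∈ s, φ p = c → φ q = c → ∀ r ∈ Ioo p q, φ r < c := by
    intro p hp q hq hφp hφq r hr
    have hpq : p < q := hr.1.trans hr.2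
    simpa [hφp, hφq] using
      hφ.lt_on_openSegment hp hq hpq.ne (by rwa [openSegment_eq_Ioo hpq])
  by_contra! hne
  rcases lt_trichotomy z x with hzx | rfl | hxz
  · exact (below z hz y hy hφz hφy x ⟨hzx, hxy⟩).ne hφx
  · exact hne.1 rfl
  rcases lt_trichotomy z y with hzy | rfl | hyz
  · exact (below x hx y hy hφx hφy z ⟨hxz, hzy⟩).ne hφz
  · exact hne.2 rfl
  · exact (below x hx z hz hφx hφz y ⟨hxy, hyz⟩).ne hφy

lemma ncard_setOf_apply_eq_eq_two (hφ : StrictConvexOn ℝ s φ) {x y : ℝ} (hx : x ∈ s)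
    (hy : y ∈ s) (hxy : x < y) (hφx : φ x = c) (hφy : φ y = c) :
    {z ∈ s | φ z = c}.ncard = 2 := by
  rw [← ncard_pair hxy.ne]
  congr 1
  ext z
  constructor
  · rintro ⟨hz, hφz⟩
    exact hφ.eq_or_eq_of_apply_eq hx hy hz hxy hφx hφy hφz
  · rintro (rfl | rfl)
    exacts [⟨hx, hφx⟩, ⟨hy, hφy⟩]

theorem ncard_setOf_apply_eq_eq_two_of_tendsto {a b : ℝ} (hφ : StrictConvexOn ℝ (Ioo a b) φ)
    (ha : Tendsto φ (𝓝[>] a) atTop) (hb : Tendsto φ (𝓝[<] b) atTop)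
    (hc : ∃ x ∈ Ioo a b, φ x < c) : {x ∈ Ioo a b | φ x = c}.ncard = 2 := by
  obtain ⟨x₀, hx₀, hφx₀⟩ := hc
  obtain ⟨u, hu, hφu⟩ := exists_mem_Ioo_gt_of_tendsto_nhdsGT hx₀.1 ha c
  obtain ⟨v, hv, hφv⟩ := exists_mem_Ioo_gt_of_tendsto_nhdsLT hx₀.2 hb c
  have hcont : ContinuousOn φ (Ioo a b) := hφ.convexOn.continuousOn isOpen_Ioo
  have hua : Icc u x₀ ⊆ Ioo a b := Icc_subset_Ioo hu.1 hx₀.2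
  have hvb : Icc x₀ v ⊆ Ioo a b := Icc_subset_Ioo hx₀.1 hv.2
  obtain ⟨x₁, hx₁, hφx₁⟩ :=
    intermediate_value_Ioo' hu.2.le (hcont.mono hua) ⟨hφx₀, hφu⟩
  obtain ⟨x₂, hx₂, hφx₂⟩ :=
    intermediate_value_Ioo hv.1.le (hcont.mono hvb) ⟨hφx₀, hφv⟩
  exact hφ.ncard_setOf_apply_eq_eq_two (hua (Ioo_subset_Icc_self hx₁))
    (hvb (Ioo_subset_Icc_self hx₂)) (hx₁.2.trans hx₂.1) hφx₁ hφx₂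

end StrictConvexOn

theorem stmt_3_general (f g : ℝ → ℝ)
    (hfc : ContinuousOn f (Set.Icc 0 1)) (hgc : ContinuousOn g (Set.Icc 0 1))
    (hf1 : ∫ x in (0:ℝ)..1, f x = 1) (hg1 : ∫ x in (0:ℝ)..1, g x = 1)
    (hgpos : ∀ x ∈ Set.Ioo (0:ℝ) 1, 0 < g x)
    (hconv : StrictConvexOn ℝ (Set.Ioo (0:ℝ) 1) (fun x => f x / g x))
    (hlim0 : Filter.Tendsto (fun x => f x / g x) (nhdsWithin 0 (Set.Ioi 0)) Filter.atTop)
    (hlim1 : Filter.Tendsto (fun x => f x / g x) (nhdsWithin 1 (Set.Iio 1)) Filter.atTop) :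
    {x ∈ Set.Ioo (0:ℝ) 1 | f x = g x}.ncard = 2 := by
  obtain ⟨y, hy, hgy⟩ := exists_mem_Ioo_gt_of_tendsto_nhdsGT zero_lt_one hlim0 1
  obtain ⟨x₀, hx₀, hfg⟩ := exists_lt_of_integral_eq_of_exists_gt zero_lt_one hfc hgc
    (hf1.trans hg1.symm) ⟨y, Ioo_subset_Icc_self hy, (one_lt_div (hgpos y hy)).1 hgy⟩
  have hset : {x ∈ Ioo (0:ℝ) 1 | f x = g x} = {x ∈ Ioo (0:ℝ) 1 | f x / g x = 1} :=
    sep_ext_iff.2 fun x hx => (div_eq_one_iff_eq (hgpos x hx).ne').symm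
  rw [hset]
  exact hconv.ncard_setOf_apply_eq_eq_two_of_tendsto hlim0 hlim1
    ⟨x₀, hx₀, (div_lt_one (hgpos x₀ hx₀)).2 hfg⟩

/-- If f and g are continuous probability densities on [0,1], positive on (0,1), whose ratio
f/g is strictly convex on (0,1) and tends to +∞ at both endpoints, then f = g at exactly
two points of (0,1). -/
theorem stmt_3 (f g : ℝ → ℝ)
    (hfc : ContinuousOn f (Set.Icc 0 1)) (hgc : ContinuousOn g (Set.Icc 0 1))
    (hf1 : ∫ x in (0:ℝ)..1, f x = 1) (hg1 : ∫ x in (0:ℝ)..1, g x = 1)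
    (hfpos : ∀ x ∈ Set.Ioo (0:ℝ) 1, 0 < f x)
    (hgpos : ∀ x ∈ Set.Ioo (0:ℝ) 1, 0 < g x)
    (hconv : StrictConvexOn ℝ (Set.Ioo (0:ℝ) 1) (fun x => f x / g x))
    (hlim0 : Filter.Tendsto (fun x => f x / g x) (nhdsWithin 0 (Set.Ioi 0)) Filter.atTop)
    (hlim1 : Filter.Tendsto (fun x => f x / g x) (nhdsWithin 1 (Set.Iio 1)) Filter.atTop) :
    {x ∈ Set.Ioo (0:ℝ) 1 | f x = g x}.ncard = 2 :=
  stmt_3_general f g hfc hgc hf1 hg1 hgpos hconv hlim0 hlim1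
end

section
/- Let f and g be continuous probability densities on [0,1], positive on (0,1), such that f(x)/g(x) is strictly convex on (0,1) and tends to +∞ at both endpoints of (0,1). Then there is no point x ∈ (0,1) where both F(x) = G(x) and f(x) = g(x) hold, where F and G are the c.d.f.'s of f and g. -/
open Set intervalIntegral

/- At a point x₀ with f(x₀) = g(x₀) the likelihood ratio t = f/g equals 1. A strictly convex
function cannot have values ≤ t(x₀) on both sides of x₀, so t > 1, i.e. f > g, on all of (0, x₀)
or on all of (x₀, 1). Then ∫₀^x₀ f > ∫₀^x₀ g or ∫_x₀^1 f > ∫_x₀^1 g; as both densities have total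
mass 1, either contradicts F(x₀) = G(x₀). -/

theorem StrictConvexOn.lt_on_right_or_lt_on_left {s : Set ℝ} {t : ℝ → ℝ}
    (ht : StrictConvexOn ℝ s t) (x : ℝ) :
    (∀ y ∈ s, x < y → t x < t y) ∨ (∀ y ∈ s, y < x → t x < t y) := by
  by_contra! h
  obtain ⟨⟨b, hbs, hxb, htb⟩, ⟨a, has, hax, hta⟩⟩ := h
  have hmid : t x < max (t a) (t b) :=
    ht.lt_on_openSegment has hbs (hax.trans hxb).ne
      (by rw [openSegment_eq_Ioo (hax.trans hxb)]; exact ⟨hax, hxb⟩)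
  exact hmid.not_ge (max_le hta htb)

theorem integral_lt_integral_of_continuousOn_of_lt_on_Ioo {f g : ℝ → ℝ} {a b : ℝ} (hab : a < b)
    (hf : ContinuousOn f (Icc a b)) (hg : ContinuousOn g (Icc a b))
    (hlt : ∀ x ∈ Ioo a b, f x < g x) :
    ∫ x in a..b, f x < ∫ x in a..b, g x := by
  have hfi : IntervalIntegrable f MeasureTheory.volume a b := hf.intervalIntegrable_of_Icc hab.le
  have hgi : IntervalIntegrable g MeasureTheory.volume a b := hg.intervalIntegrable_of_Icc hab.le
  have hpos : 0 < ∫ x in a..b, (g x - f x) :=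
    intervalIntegral_pos_of_pos_on (hgi.sub hfi) (fun x hx => sub_pos.mpr (hlt x hx)) hab
  rw [integral_sub hgi hfi] at hpos
  linarith

theorem integral_eq_sub_of_continuousOn_Icc {f : ℝ → ℝ} {a b c : ℝ}
    (hf : ContinuousOn f (Icc a b)) (hc : c ∈ Icc a b) :
    ∫ x in c..b, f x = (∫ x in a..b, f x) - ∫ x in a..c, f x :=
  (integral_interval_sub_left (hf.intervalIntegrable_of_Icc (hc.1.trans hc.2))
    ((hf.mono (Icc_subset_Icc le_rfl hc.2)).intervalIntegrable_of_Icc hc.1)).symm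

theorem stmt_4_general (f g : ℝ → ℝ)
    (hfc : ContinuousOn f (Set.Icc 0 1)) (hgc : ContinuousOn g (Set.Icc 0 1))
    (hf1 : ∫ x in (0:ℝ)..1, f x = 1) (hg1 : ∫ x in (0:ℝ)..1, g x = 1)
    (hgpos : ∀ x ∈ Set.Ioo (0:ℝ) 1, 0 < g x)
    (hconv : StrictConvexOn ℝ (Set.Ioo (0:ℝ) 1) (fun x => f x / g x))
    (F G : ℝ → ℝ)
    (hF : ∀ x, F x = ∫ t in (0:ℝ)..x, f t)
    (hG : ∀ x, G x = ∫ t in (0:ℝ)..x, g t) :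
    ¬ ∃ x ∈ Set.Ioo (0:ℝ) 1, F x = G x ∧ f x = g x := by
  rintro ⟨x, hx, hFG, hfg⟩
  rw [hF, hG] at hFG
  have hratio : f x / g x = 1 := by rw [hfg, div_self (hgpos x hx).ne']
  have hg_lt_f : ∀ y ∈ Ioo (0:ℝ) 1, f x / g x < f y / g y → g y < f y := fun y hy h =>
    (one_lt_div (hgpos y hy)).1 (hratio ▸ h)
  rcases hconv.lt_on_right_or_lt_on_left x with hright | hleft
  · have hlt : ∫ t in x..1, g t < ∫ t in x..1, f t :=
      integral_lt_integral_of_continuousOn_of_lt_on_Ioo hx.2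
        (hgc.mono (Icc_subset_Icc hx.1.le le_rfl)) (hfc.mono (Icc_subset_Icc hx.1.le le_rfl))
        fun y hy => hg_lt_f y ⟨hx.1.trans hy.1, hy.2⟩ (hright y ⟨hx.1.trans hy.1, hy.2⟩ hy.1)
    rw [integral_eq_sub_of_continuousOn_Icc hfc (Ioo_subset_Icc_self hx),
      integral_eq_sub_of_continuousOn_Icc hgc (Ioo_subset_Icc_self hx), hf1, hg1] at hlt
    linarith
  · have hlt : ∫ t in (0:ℝ)..x, g t < ∫ t in (0:ℝ)..x, f t :=
      integral_lt_integral_of_continuousOn_of_lt_on_Ioo hx.1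
        (hgc.mono (Icc_subset_Icc le_rfl hx.2.le)) (hfc.mono (Icc_subset_Icc le_rfl hx.2.le))
        fun y hy => hg_lt_f y ⟨hy.1, hy.2.trans hx.2⟩ (hleft y ⟨hy.1, hy.2.trans hx.2⟩ hy.2)
    linarith

/-- Under the two-crossing hypotheses, there is no interior point where both the c.d.f.'s
and the densities agree. -/
theorem stmt_4 (f g : ℝ → ℝ)
    (hfc : ContinuousOn f (Set.Icc 0 1)) (hgc : ContinuousOn g (Set.Icc 0 1))
    (hf1 : ∫ x in (0:ℝ)..1, f x = 1) (hg1 : ∫ x in (0:ℝ)..1, g x = 1)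
    (hfpos : ∀ x ∈ Set.Ioo (0:ℝ) 1, 0 < f x)
    (hgpos : ∀ x ∈ Set.Ioo (0:ℝ) 1, 0 < g x)
    (hconv : StrictConvexOn ℝ (Set.Ioo (0:ℝ) 1) (fun x => f x / g x))
    (hlim0 : Filter.Tendsto (fun x => f x / g x) (nhdsWithin 0 (Set.Ioi 0)) Filter.atTop)
    (hlim1 : Filter.Tendsto (fun x => f x / g x) (nhdsWithin 1 (Set.Iio 1)) Filter.atTop)
    (F G : ℝ → ℝ)
    (hF : ∀ x, F x = ∫ t in (0:ℝ)..x, f t)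
    (hG : ∀ x, G x = ∫ t in (0:ℝ)..x, g t)
    (hunique : ∃! x₀, x₀ ∈ Set.Ioo (0:ℝ) 1 ∧ F x₀ = G x₀) :
    ¬ ∃ x ∈ Set.Ioo (0:ℝ) 1, F x = G x ∧ f x = g x :=
  stmt_4_general f g hfc hgc hf1 hg1 hgpos hconv F G hF hG
end

section
/- Let F₁, F₂ be c.d.f.'s on [0,1] of continuous positive densities, and suppose there is a unique x* ∈ (0,1) with F₁(x*) = F₂(x*), F₁(x) > F₂(x) for 0 < x < x*, and F₁(x) < F₂(x) for x* < x < 1 (i.e., F₂ is more bunched around x* than F₁). If X₁ ∼ F₁ and X₂ ∼ F₂ have equal means, then E[φ(X₂)] ≥ E[φ(X₁)] for every increasing concave function φ : ℝ → ℝ. -/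
/-!
Subtracting a supporting line `K * x` of `φ` at `x*` changes both expectations by the same
amount, since the means agree, and leaves a function `ψ` that increases up to `x*` and decreases
after it. Then `ψ x = ψ (min x x*) + ψ (max x x*) - ψ x*` with both parts monotone, and the single
crossing of `F₁, F₂` says exactly that `min X₁ x* ≤ min X₂ x*` and `max X₂ x* ≤ max X₁ x*` in
first-order stochastic order. For a continuous increasing `g`, that order compares `E g(Y)`
through the Fubini identity `E g(Y) = g(a) + ∫_{(a, ∞)} P(Y > x) dg(x)`.
-/

open MeasureTheory Set

theorem ConvexOn.exists_antitoneOn_Iic_monotoneOn_Ici_sub_mul {f : ℝ → ℝ}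
    (hf : ConvexOn ℝ univ f) (c : ℝ) :
    ∃ K, AntitoneOn (fun x => f x - K * x) (Iic c) ∧
      MonotoneOn (fun x => f x - K * x) (Ici c) := by
  set D : ℝ → ℝ := fun x => derivWithin f (Ioi x) x
  have hD : Monotone D := fun x y hxy =>
    hf.monotoneOn_rightDeriv (by simp) (by simp) hxy
  have slope_le_D : ∀ {a b}, a < b → slope f a b ≤ D b := fun hab =>
    (hf.slope_le_leftDeriv_of_mem_interior (mem_univ _) (by simp) hab).trans
      (hf.leftDeriv_le_rightDeriv_of_mem_interior (by simp))
  have D_le_slope : ∀ {a b}, a < b → D a ≤ slope f a b := fun hab =>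
    hf.rightDeriv_le_slope_of_mem_interior (by simp) (mem_univ _) hab
  refine ⟨D c, fun a ha b hb hab => ?_, fun a ha b hb hab => ?_⟩
  · rcases hab.eq_or_lt with rfl | hab
    · rfl
    have := (slope_le_D hab).trans (hD hb)
    rw [slope_def_field, div_le_iff₀ (sub_pos.2 hab)] at this
    dsimp only
    linarith
  · rcases hab.eq_or_lt with rfl | hab
    · rfl
    have := (hD ha).trans (D_le_slope hab)
    rw [slope_def_field, le_div_iff₀ (sub_pos.2 hab)] at this
    dsimp only
    linarith

theorem ConcaveOn.exists_monotoneOn_Iic_antitoneOn_Ici_sub_mul {f : ℝ → ℝ}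
    (hf : ConcaveOn ℝ univ f) (c : ℝ) :
    ∃ K, MonotoneOn (fun x => f x - K * x) (Iic c) ∧
      AntitoneOn (fun x => f x - K * x) (Ici c) := by
  obtain ⟨K, hanti, hmono⟩ := hf.neg.exists_antitoneOn_Iic_monotoneOn_Ici_sub_mul c
  have h : (fun x => f x - -K * x) = -fun x => -f x - K * x := by
    ext x
    simp only [Pi.neg_apply]
    ring
  exact ⟨-K, h ▸ hanti.neg, h ▸ hmono.neg⟩

section

variable {Ω : Type*} [MeasurableSpace Ω] {μ : Measure Ω}

theorem lintegral_measure_Ioo_eq_setLIntegral_measure_lt [SFinite μ] (ν : Measure ℝ) [SFinite ν]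
    {Y : Ω → ℝ} (hY : Measurable Y) (a : ℝ) :
    ∫⁻ ω, ν (Ioo a (Y ω)) ∂μ = ∫⁻ x in Ioi a, μ {ω | x < Y ω} ∂ν := by
  set s : Set (Ω × ℝ) := {p | a < p.2 ∧ p.2 < Y p.1}
  have hs : MeasurableSet s :=
    (measurableSet_lt measurable_const measurable_snd).inter
      (measurableSet_lt measurable_snd (hY.comp measurable_fst))
  calc ∫⁻ ω, ν (Ioo a (Y ω)) ∂μ = μ.prod ν s := (Measure.prod_apply hs).symm
    _ = ∫⁻ x, μ ((·, x) ⁻¹' s) ∂ν := Measure.prod_apply_symm hs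
    _ = ∫⁻ x, (Ioi a).indicator (fun x => μ {ω | x < Y ω}) x ∂ν := by
      congr 1 with x
      by_cases hx : a < x <;> simp [s, hx]
    _ = ∫⁻ x in Ioi a, μ {ω | x < Y ω} ∂ν := lintegral_indicator measurableSet_Ioi _

theorem StieltjesFunction.ofReal_integral_sub_eq_setLIntegral [IsFiniteMeasure μ]
    (f : StieltjesFunction ℝ) (hf : Continuous f) {Y : Ω → ℝ} (hY : Measurable Y) {a : ℝ}
    (ha : ∀ᵐ ω ∂μ, a ≤ Y ω) (hint : Integrable (fun ω => f (Y ω)) μ) :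
    ENNReal.ofReal (∫ ω, (f (Y ω) - f a) ∂μ) = ∫⁻ x in Ioi a, μ {ω | x < Y ω} ∂f.measure := by
  rw [← lintegral_measure_Ioo_eq_setLIntegral_measure_lt _ hY,
    ofReal_integral_eq_lintegral_ofReal (f := fun ω => f (Y ω) - f a)
      (hint.sub (integrable_const _))
      (ha.mono fun ω hω => sub_nonneg.2 (f.mono hω))]
  congr 1 with ω
  rw [f.measure_Ioo, hf.continuousWithinAt.leftLim_eq]

theorem measure_lt_le_measure_lt_of_measureReal_le [IsFiniteMeasure μ] {Y₁ Y₂ : Ω → ℝ}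
    (hY₁ : Measurable Y₁) (hY₂ : Measurable Y₂) {x : ℝ}
    (h : μ.real {ω | Y₂ ω ≤ x} ≤ μ.real {ω | Y₁ ω ≤ x}) :
    μ {ω | x < Y₁ ω} ≤ μ {ω | x < Y₂ ω} := by
  have hcompl : ∀ Y : Ω → ℝ, {ω | x < Y ω} = {ω | Y ω ≤ x}ᶜ := fun Y => by ext; simp
  rw [← ENNReal.toReal_le_toReal (measure_ne_top _ _) (measure_ne_top _ _), ← measureReal_def,
    ← measureReal_def, hcompl, hcompl, measureReal_compl (measurableSet_le hY₁ measurable_const),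
    measureReal_compl (measurableSet_le hY₂ measurable_const)]
  linarith

theorem Continuous.integrable_comp_of_ae_mem_Icc [IsFiniteMeasure μ] {g : ℝ → ℝ}
    (hg : Continuous g) {Y : Ω → ℝ} (hY : Measurable Y) {a b : ℝ}
    (h : ∀ᵐ ω ∂μ, Y ω ∈ Icc a b) : Integrable (fun ω => g (Y ω)) μ := by
  obtain ⟨C, hC⟩ := isCompact_Icc.exists_bound_of_continuousOn hg.continuousOn
  exact Integrable.of_bound (hg.measurable.comp hY).aestronglyMeasurable C
    (h.mono fun ω hω => hC _ hω)

theorem Monotone.integral_comp_le_of_cdf_le [IsFiniteMeasure μ] {g : ℝ → ℝ} (hg : Monotone g)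
    (hgc : Continuous g) {Y₁ Y₂ : Ω → ℝ} (hY₁ : Measurable Y₁) (hY₂ : Measurable Y₂) {a b : ℝ}
    (h₁ : ∀ᵐ ω ∂μ, Y₁ ω ∈ Icc a b) (h₂ : ∀ᵐ ω ∂μ, Y₂ ω ∈ Icc a b)
    (hcdf : ∀ x ∈ Ioo a b, μ.real {ω | Y₂ ω ≤ x} ≤ μ.real {ω | Y₁ ω ≤ x}) :
    ∫ ω, g (Y₁ ω) ∂μ ≤ ∫ ω, g (Y₂ ω) ∂μ := by
  let f : StieltjesFunction ℝ := ⟨g, hg, fun _ => hgc.continuousWithinAt⟩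
  have hint₁ := hgc.integrable_comp_of_ae_mem_Icc hY₁ h₁
  have hint₂ := hgc.integrable_comp_of_ae_mem_Icc hY₂ h₂
  have hsurv : ∀ x ∈ Ioi a, μ {ω | x < Y₁ ω} ≤ μ {ω | x < Y₂ ω} := by
    intro x hx
    rcases lt_or_ge x b with hxb | hbx
    · exact measure_lt_le_measure_lt_of_measureReal_le hY₁ hY₂ (hcdf x ⟨hx, hxb⟩)
    · refine (measure_mono_null (fun ω hω => ?_) (ae_iff.1 h₁)).trans_le bot_le
      exact fun hmem => (hmem.2.trans hbx).not_gt hω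
  have key : ENNReal.ofReal (∫ ω, (g (Y₁ ω) - g a) ∂μ)
      ≤ ENNReal.ofReal (∫ ω, (g (Y₂ ω) - g a) ∂μ) := by
    rw [f.ofReal_integral_sub_eq_setLIntegral hgc hY₁ (h₁.mono fun _ h => h.1) hint₁,
      f.ofReal_integral_sub_eq_setLIntegral hgc hY₂ (h₂.mono fun _ h => h.1) hint₂]
    exact setLIntegral_mono' measurableSet_Ioi hsurv
  have hnonneg : 0 ≤ ∫ ω, (g (Y₂ ω) - g a) ∂μ :=
    integral_nonneg_of_ae (h₂.mono fun ω hω => sub_nonneg.2 (hg hω.1))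
  have := (ENNReal.ofReal_le_ofReal_iff hnonneg).1 key
  rwa [integral_sub hint₁ (integrable_const _), integral_sub hint₂ (integrable_const _),
    sub_le_sub_iff_right] at this

theorem integral_comp_le_of_monotoneOn_Iic_antitoneOn_Ici [IsFiniteMeasure μ] {ψ : ℝ → ℝ}
    (hψ : Continuous ψ) {a b c : ℝ} (hac : a ≤ c) (hcb : c ≤ b) (hmono : MonotoneOn ψ (Iic c))
    (hanti : AntitoneOn ψ (Ici c)) {Y₁ Y₂ : Ω → ℝ} (hY₁ : Measurable Y₁) (hY₂ : Measurable Y₂)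
    (h₁ : ∀ᵐ ω ∂μ, Y₁ ω ∈ Icc a b) (h₂ : ∀ᵐ ω ∂μ, Y₂ ω ∈ Icc a b)
    (hbelow : ∀ x ∈ Ioo a c, μ.real {ω | Y₂ ω ≤ x} ≤ μ.real {ω | Y₁ ω ≤ x})
    (habove : ∀ x ∈ Ioo c b, μ.real {ω | Y₁ ω ≤ x} ≤ μ.real {ω | Y₂ ω ≤ x}) :
    ∫ ω, ψ (Y₁ ω) ∂μ ≤ ∫ ω, ψ (Y₂ ω) ∂μ := by
  have hL : Monotone fun y => ψ (min y c) := fun x y hxy =>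
    hmono (min_le_right x c) (min_le_right y c) (min_le_min_right c hxy)
  have hR : Monotone fun y => -ψ (max y c) := fun x y hxy =>
    neg_le_neg (hanti (le_max_right x c) (le_max_right y c) (max_le_max_right c hxy))
  have hLc : Continuous fun y => ψ (min y c) := by fun_prop
  have hRc : Continuous fun y => -ψ (max y c) := by fun_prop
  have min_mem : ∀ {Y : Ω → ℝ}, (∀ᵐ ω ∂μ, Y ω ∈ Icc a b) → ∀ᵐ ω ∂μ, min (Y ω) c ∈ Icc a c :=
    fun h => h.mono fun ω hω => ⟨le_min hω.1 hac, min_le_right _ _⟩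
  have max_mem : ∀ {Y : Ω → ℝ}, (∀ᵐ ω ∂μ, Y ω ∈ Icc a b) → ∀ᵐ ω ∂μ, max (Y ω) c ∈ Icc c b :=
    fun h => h.mono fun ω hω => ⟨le_max_right _ _, max_le hω.2 hcb⟩
  have lower := hL.integral_comp_le_of_cdf_le hLc (hY₁.min measurable_const)
    (hY₂.min measurable_const) (min_mem h₁) (min_mem h₂) fun x hx => by
      simpa only [min_le_iff, hx.2.not_ge, or_false] using hbelow x hx
  have upper := hR.integral_comp_le_of_cdf_le hRc (hY₂.max measurable_const)
    (hY₁.max measurable_const) (max_mem h₂) (max_mem h₁) fun x hx => by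
      simpa only [max_le_iff, hx.1.le, and_true] using habove x hx
  simp only [min_assoc, min_self, max_assoc, max_self, integral_neg, neg_le_neg_iff] at lower upper
  have hdecomp : ∀ {Y : Ω → ℝ}, Measurable Y → (∀ᵐ ω ∂μ, Y ω ∈ Icc a b) →
      ∫ ω, ψ (Y ω) ∂μ = ∫ ω, ψ (min (Y ω) c) ∂μ + ∫ ω, ψ (max (Y ω) c) ∂μ - ∫ _, ψ c ∂μ := by
    intro Y hY h
    have hmin : Integrable (fun ω => ψ (min (Y ω) c)) μ :=
      hLc.integrable_comp_of_ae_mem_Icc hY h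
    have hmax : Integrable (fun ω => ψ (max (Y ω) c)) μ :=
      Continuous.integrable_comp_of_ae_mem_Icc (g := fun y => ψ (max y c)) (by fun_prop) hY h
    rw [← integral_add hmin hmax,
      ← integral_sub (f := fun ω => ψ (min (Y ω) c) + ψ (max (Y ω) c)) (hmin.add hmax)
        (integrable_const _)]
    congr 1 with ω
    rcases le_total (Y ω) c with hc | hc <;> simp [hc]
  rw [hdecomp hY₁ h₁, hdecomp hY₂ h₂]
  linarith

end

theorem stmt_6_general {Ω : Type*} [MeasurableSpace Ω] (μ : Measure Ω) [IsProbabilityMeasure μ]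
    (X₁ X₂ : Ω → ℝ) (hX₁ : Measurable X₁) (hX₂ : Measurable X₂)
    (hsupp₁ : ∀ᵐ ω ∂μ, X₁ ω ∈ Set.Icc (0:ℝ) 1)
    (hsupp₂ : ∀ᵐ ω ∂μ, X₂ ω ∈ Set.Icc (0:ℝ) 1)
    (F₁ F₂ : ℝ → ℝ)
    (hF₁ : ∀ x, F₁ x = (μ {ω | X₁ ω ≤ x}).toReal)
    (hF₂ : ∀ x, F₂ x = (μ {ω | X₂ ω ≤ x}).toReal)
    (xstar : ℝ) (hx : xstar ∈ Set.Ioo (0:ℝ) 1)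
    (hbelow : ∀ x ∈ Set.Ioo (0:ℝ) xstar, F₁ x > F₂ x)
    (habove : ∀ x ∈ Set.Ioo xstar (1:ℝ), F₁ x < F₂ x)
    (hmean : ∫ ω, X₁ ω ∂μ = ∫ ω, X₂ ω ∂μ) :
    ∀ φ : ℝ → ℝ, Monotone φ → ConcaveOn ℝ Set.univ φ →
      Integrable (fun ω => φ (X₁ ω)) μ → Integrable (fun ω => φ (X₂ ω)) μ →
      ∫ ω, φ (X₂ ω) ∂μ ≥ ∫ ω, φ (X₁ ω) ∂μ := by
  intro φ _ hφ hint₁ hint₂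
  obtain ⟨K, hmono, hanti⟩ := hφ.exists_monotoneOn_Iic_antitoneOn_Ici_sub_mul xstar
  have hψ : Continuous fun x => φ x - K * x := hφ.locallyLipschitz.continuous.sub (by fun_prop)
  have key := integral_comp_le_of_monotoneOn_Iic_antitoneOn_Ici hψ hx.1.le hx.2.le hmono hanti
    hX₁ hX₂ hsupp₁ hsupp₂
    (fun x hx => by simpa only [hF₁, hF₂, ← measureReal_def] using (hbelow x hx).le)
    (fun x hx => by simpa only [hF₁, hF₂, ← measureReal_def] using (habove x hx).le)
  have hX₁int : Integrable X₁ μ := continuous_id.integrable_comp_of_ae_mem_Icc hX₁ hsupp₁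
  have hX₂int : Integrable X₂ μ := continuous_id.integrable_comp_of_ae_mem_Icc hX₂ hsupp₂
  rw [integral_sub (g := fun ω => K * X₁ ω) hint₁ (hX₁int.const_mul K),
    integral_sub (g := fun ω => K * X₂ ω) hint₂ (hX₂int.const_mul K), integral_const_mul,
    integral_const_mul, hmean] at key
  linarith

/-- If F₂ is more bunched than F₁ around x* and the means are equal, then
E[φ(X₂)] ≥ E[φ(X₁)] for every increasing concave φ. -/
theorem stmt_6 {Ω : Type*} [MeasurableSpace Ω] (μ : Measure Ω) [IsProbabilityMeasure μ]
    (X₁ X₂ : Ω → ℝ) (hX₁ : Measurable X₁) (hX₂ : Measurable X₂)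
    (hsupp₁ : ∀ᵐ ω ∂μ, X₁ ω ∈ Set.Icc (0:ℝ) 1)
    (hsupp₂ : ∀ᵐ ω ∂μ, X₂ ω ∈ Set.Icc (0:ℝ) 1)
    (F₁ F₂ : ℝ → ℝ)
    (hF₁ : ∀ x, F₁ x = (μ {ω | X₁ ω ≤ x}).toReal)
    (hF₂ : ∀ x, F₂ x = (μ {ω | X₂ ω ≤ x}).toReal)
    (xstar : ℝ) (hx : xstar ∈ Set.Ioo (0:ℝ) 1)
    (hcross : F₁ xstar = F₂ xstar)
    (hbelow : ∀ x ∈ Set.Ioo (0:ℝ) xstar, F₁ x > F₂ x)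
    (habove : ∀ x ∈ Set.Ioo xstar (1:ℝ), F₁ x < F₂ x)
    (hmean : ∫ ω, X₁ ω ∂μ = ∫ ω, X₂ ω ∂μ) :
    ∀ φ : ℝ → ℝ, Monotone φ → ConcaveOn ℝ Set.univ φ →
      Integrable (fun ω => φ (X₁ ω)) μ → Integrable (fun ω => φ (X₂ ω)) μ →
      ∫ ω, φ (X₂ ω) ∂μ ≥ ∫ ω, φ (X₁ ω) ∂μ :=
  stmt_6_general μ X₁ X₂ hX₁ hX₂ hsupp₁ hsupp₂ F₁ F₂ hF₁ hF₂ xstar hx hbelow habove hmean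
end

section
/- Fix n, m > 0 and 0 < a₁ < a₂, and let F_{a_i} be the c.d.f. of Beta(n·a_i, m·a_i). Then F_{a₁}(x) - F_{a₂}(x) > 0 for all x sufficiently close to 0 in (0,1), and F_{a₁}(x) - F_{a₂}(x) < 0 for all x sufficiently close to 1 in (0,1). -/
/-!
Near `0` the Beta(p, q) density behaves like `t ^ (p - 1)`, so its c.d.f. is squeezed between
two constant multiples of `x ^ p`. With `p₁ = n a₁ < p₂ = n a₂` the ratio
`x ^ p₂ / x ^ p₁ = x ^ (p₂ - p₁)` tends to `0`, hence `F_{a₁} > F_{a₂}` near `0`.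
The reflection `t ↦ 1 - t` turns the Beta(p, q) c.d.f. into `1 -` the Beta(q, p) c.d.f.
at `1 - x`, and the same comparison with the exponents `m a₁ < m a₂` gives the claim near `1`.
-/

open MeasureTheory intervalIntegral Set Filter Topology Real

noncomputable def betaInc (p q x : ℝ) : ℝ :=
  ∫ t in (0:ℝ)..x, t ^ (p - 1) * (1 - t) ^ (q - 1)

noncomputable def betaCDF (p q x : ℝ) : ℝ :=
  betaInc p q x / betaInc p q 1

lemma eventually_lt_of_rpow_bounds {f g : ℝ → ℝ} {c C p₁ p₂ : ℝ} (hc : 0 < c)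
    (hp : p₁ < p₂) (hf : ∀ᶠ x in 𝓝[>] 0, c * x ^ p₁ ≤ f x)
    (hg : ∀ᶠ x in 𝓝[>] 0, g x ≤ C * x ^ p₂) :
    ∀ᶠ x in 𝓝[>] 0, g x < f x := by
  have hd : 0 < p₂ - p₁ := sub_pos.mpr hp
  have htend : Tendsto (fun x : ℝ => C * x ^ (p₂ - p₁)) (𝓝[>] 0) (𝓝 0) := by
    have := ((continuousAt_rpow_const 0 _ (Or.inr hd.le)).tendsto.const_mul C).mono_left
      (nhdsWithin_le_nhds (s := Ioi 0))
    simpa [zero_rpow hd.ne'] using this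
  filter_upwards [hf, hg, htend.eventually_lt_const hc, self_mem_nhdsWithin]
    with x hfx hgx hlt (hx : 0 < x)
  calc g x ≤ C * x ^ p₂ := hgx
    _ = C * x ^ (p₂ - p₁) * x ^ p₁ := by rw [mul_assoc, ← rpow_add hx, sub_add_cancel]
    _ < c * x ^ p₁ := mul_lt_mul_of_pos_right hlt (rpow_pos_of_pos hx _)
    _ ≤ f x := hfx

lemma rpow_mem_Icc_min_max {a z r : ℝ} (ha : 0 < a) (hz : z ∈ Icc a 1) :
    z ^ r ∈ Icc (min 1 (a ^ r)) (max 1 (a ^ r)) := by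
  have hz0 : 0 < z := ha.trans_le hz.1
  rcases le_total 0 r with hr | hr
  · exact ⟨(min_le_right _ _).trans (rpow_le_rpow ha.le hz.1 hr),
      (rpow_le_one hz0.le hz.2 hr).trans (le_max_left _ _)⟩
  · exact ⟨(min_le_left _ _).trans (one_rpow r ▸ rpow_le_rpow_of_nonpos hz0 hz.2 hr),
      (rpow_le_rpow_of_nonpos ha hz.1 hr).trans (le_max_right _ _)⟩

section Beta

variable {p q x : ℝ}

lemma intervalIntegrable_betaIntegrand_zero_half (hp : 0 < p) :
    IntervalIntegrable (fun t : ℝ => t ^ (p - 1) * (1 - t) ^ (q - 1)) volume 0 (1 / 2) := by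
  refine (intervalIntegrable_rpow' (by linarith)).mul_continuousOn
    (ContinuousOn.rpow_const (by fun_prop) fun t ht => Or.inl ?_)
  rw [uIcc_of_le (by norm_num)] at ht
  linarith [ht.2]

lemma intervalIntegrable_betaIntegrand (hp : 0 < p) (hq : 0 < q) :
    IntervalIntegrable (fun t : ℝ => t ^ (p - 1) * (1 - t) ^ (q - 1)) volume 0 1 := by
  have hright := (intervalIntegrable_betaIntegrand_zero_half (q := p) hq).comp_sub_left 1
  norm_num only [sub_sub_cancel, sub_zero] at hright
  refine (intervalIntegrable_betaIntegrand_zero_half hp).trans (hright.symm.congr ?_)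
  exact fun t _ => mul_comm _ _

lemma intervalIntegrable_betaIntegrand_of_mem_Icc (hp : 0 < p) (hq : 0 < q)
    {y : ℝ} (hx : x ∈ Icc (0:ℝ) 1) (hy : y ∈ Icc (0:ℝ) 1) :
    IntervalIntegrable (fun t : ℝ => t ^ (p - 1) * (1 - t) ^ (q - 1)) volume x y :=
  (intervalIntegrable_betaIntegrand hp hq).mono_set <| by
    rw [uIcc_of_le zero_le_one]; exact uIcc_subset_Icc hx hy

lemma betaInc_one_pos (hp : 0 < p) (hq : 0 < q) : 0 < betaInc p q 1 :=
  intervalIntegral_pos_of_pos_on (intervalIntegrable_betaIntegrand hp hq)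
    (fun t ht => mul_pos (rpow_pos_of_pos ht.1 _) (rpow_pos_of_pos (by linarith [ht.2]) _))
    one_pos

lemma integral_rpow_sub_one (hp : 0 < p) : ∫ t in (0:ℝ)..x, t ^ (p - 1) = x ^ p / p := by
  rw [integral_rpow (Or.inl (by linarith)), sub_add_cancel, zero_rpow hp.ne', sub_zero]

/-- On `[0, 1/2]` the factor `(1 - t) ^ (q - 1)` is pinched between two positive constants. -/
lemma betaInc_mem_Icc (hp : 0 < p) (hx0 : 0 < x) (hx : x ≤ 1 / 2) :
    betaInc p q x ∈ Icc (min 1 ((1 / 2 : ℝ) ^ (q - 1)) * (x ^ p / p))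
      (max 1 ((1 / 2 : ℝ) ^ (q - 1)) * (x ^ p / p)) := by
  have hint : IntervalIntegrable (fun t : ℝ => t ^ (p - 1) * (1 - t) ^ (q - 1)) volume 0 x :=
    (intervalIntegrable_betaIntegrand_zero_half hp).mono_set <| by
      rw [uIcc_of_le hx0.le, uIcc_of_le (by norm_num)]; exact Icc_subset_Icc_right hx
  have hpow (c : ℝ) : IntervalIntegrable (fun t : ℝ => c * t ^ (p - 1)) volume 0 x :=
    (intervalIntegrable_rpow' (by linarith)).const_mul c
  have hfactor (t : ℝ) (ht : t ∈ Icc 0 x) :=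
    rpow_mem_Icc_min_max (r := q - 1) (by norm_num : (0:ℝ) < 1 / 2)
      (z := 1 - t) ⟨by linarith [ht.2], by linarith [ht.1]⟩
  rw [← integral_rpow_sub_one hp, ← intervalIntegral.integral_const_mul,
    ← intervalIntegral.integral_const_mul]
  constructor
  · refine integral_mono_on hx0.le (hpow _) hint fun t ht => ?_
    rw [mul_comm (t ^ (p - 1))]
    exact mul_le_mul_of_nonneg_right (hfactor t ht).1 (rpow_nonneg ht.1 _)
  · refine integral_mono_on hx0.le hint (hpow _) fun t ht => ?_
    rw [mul_comm (t ^ (p - 1))]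
    exact mul_le_mul_of_nonneg_right (hfactor t ht).2 (rpow_nonneg ht.1 _)

lemma betaInc_reflect :
    ∫ t in x..1, t ^ (p - 1) * (1 - t) ^ (q - 1) = betaInc q p (1 - x) := by
  have h := integral_comp_sub_left (a := x) (b := 1)
    (fun s : ℝ => s ^ (q - 1) * (1 - s) ^ (p - 1)) 1
  simp only [sub_sub_cancel, sub_self] at h
  rw [betaInc, ← h]
  exact integral_congr fun t _ => mul_comm _ _

lemma betaInc_one_comm : betaInc p q 1 = betaInc q p 1 := by
  have h := betaInc_reflect (p := p) (q := q) (x := 0)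
  rwa [sub_zero] at h

lemma betaCDF_eq_one_sub (hp : 0 < p) (hq : 0 < q) (hx : x ∈ Icc (0:ℝ) 1) :
    betaCDF p q x = 1 - betaCDF q p (1 - x) := by
  have hsplit := integral_add_adjacent_intervals
    (intervalIntegrable_betaIntegrand_of_mem_Icc hp hq (left_mem_Icc.mpr zero_le_one) hx)
    (intervalIntegrable_betaIntegrand_of_mem_Icc hp hq hx (right_mem_Icc.mpr zero_le_one))
  rw [betaInc_reflect] at hsplit
  have hB := (betaInc_one_pos hq hp).ne'
  rw [betaCDF, betaCDF, betaInc_one_comm, eq_sub_iff_add_eq, ← add_div, div_eq_one_iff_eq hB,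
    ← betaInc_one_comm]
  exact hsplit

lemma betaCDF_lt_nhdsGT_zero {p₁ q₁ p₂ q₂ : ℝ} (hp₁ : 0 < p₁) (hp : p₁ < p₂)
    (hq₁ : 0 < q₁) (hq₂ : 0 < q₂) :
    ∀ᶠ x in 𝓝[>] 0, betaCDF p₂ q₂ x < betaCDF p₁ q₁ x := by
  have hp₂ : 0 < p₂ := hp₁.trans hp
  have hB₁ := betaInc_one_pos hp₁ hq₁
  have hB₂ := betaInc_one_pos hp₂ hq₂
  have hsmall : ∀ᶠ x in 𝓝[>] (0:ℝ), x ∈ Ioc 0 (1 / 2) := Ioc_mem_nhdsGT (by norm_num)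
  refine eventually_lt_of_rpow_bounds
    (c := min 1 ((1 / 2 : ℝ) ^ (q₁ - 1)) / (p₁ * betaInc p₁ q₁ 1))
    (C := max 1 ((1 / 2 : ℝ) ^ (q₂ - 1)) / (p₂ * betaInc p₂ q₂ 1))
    (by positivity) hp ?_ ?_
  · filter_upwards [hsmall] with x hx
    rw [betaCDF, le_div_iff₀ hB₁]
    convert (betaInc_mem_Icc (q := q₁) hp₁ hx.1 hx.2).1 using 1
    field_simp
  · filter_upwards [hsmall] with x hx
    rw [betaCDF, div_le_iff₀ hB₂]
    convert (betaInc_mem_Icc (q := q₂) hp₂ hx.1 hx.2).2 using 1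
    field_simp

lemma betaCDF_lt_nhdsLT_one {p₁ q₁ p₂ q₂ : ℝ} (hp₁ : 0 < p₁) (hp₂ : 0 < p₂)
    (hq₁ : 0 < q₁) (hq : q₁ < q₂) :
    ∀ᶠ x in 𝓝[<] 1, betaCDF p₁ q₁ x < betaCDF p₂ q₂ x := by
  have hreflect : Tendsto (fun x : ℝ => 1 - x) (𝓝[<] 1) (𝓝[>] 0) := by
    refine tendsto_nhdsWithin_iff.mpr ⟨?_, ?_⟩
    · simpa using ((continuous_sub_left (1:ℝ)).tendsto 1).mono_left nhdsWithin_le_nhds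
    · filter_upwards [self_mem_nhdsWithin] with x (hx : x < 1) using sub_pos.mpr hx
  filter_upwards [hreflect.eventually (betaCDF_lt_nhdsGT_zero hq₁ hq hp₁ hp₂),
    Ioo_mem_nhdsLT (by norm_num : (0:ℝ) < 1)] with x hx hx01
  rw [betaCDF_eq_one_sub hp₁ hq₁ (Ioo_subset_Icc_self hx01),
    betaCDF_eq_one_sub hp₂ (hq₁.trans hq) (Ioo_subset_Icc_self hx01)]
  linarith

end Beta

/-- For the Beta(na, ma) c.d.f.'s with 0 < a₁ < a₂, F_{a₁} - F_{a₂} is positive near 0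
and negative near 1. -/
theorem stmt_9 (n m a₁ a₂ : ℝ) (hn : 0 < n) (hm : 0 < m)
    (ha₁ : 0 < a₁) (ha : a₁ < a₂)
    (F : ℝ → ℝ → ℝ)
    (hF : ∀ a, ∀ x, F a x = (∫ t in (0:ℝ)..x, t ^ (n*a - 1) * (1 - t) ^ (m*a - 1))
        / (∫ t in (0:ℝ)..1, t ^ (n*a - 1) * (1 - t) ^ (m*a - 1))) :
    (∀ᶠ x in nhdsWithin 0 (Set.Ioi (0:ℝ)) ⊓ Filter.principal (Set.Ioo (0:ℝ) 1),
        F a₁ x - F a₂ x > 0) ∧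
    (∀ᶠ x in nhdsWithin 1 (Set.Iio (1:ℝ)) ⊓ Filter.principal (Set.Ioo (0:ℝ) 1),
        F a₁ x - F a₂ x < 0) := by
  obtain rfl : F = fun a x => betaCDF (n * a) (m * a) x := funext₂ hF
  have ha₂ : 0 < a₂ := ha₁.trans ha
  constructor
  · filter_upwards [(betaCDF_lt_nhdsGT_zero (mul_pos hn ha₁) (mul_lt_mul_of_pos_left ha hn)
      (mul_pos hm ha₁) (mul_pos hm ha₂)).filter_mono inf_le_left] with x hx
    exact sub_pos.mpr hx
  · filter_upwards [(betaCDF_lt_nhdsLT_one (mul_pos hn ha₁) (mul_pos hn ha₂)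
      (mul_pos hm ha₁) (mul_lt_mul_of_pos_left ha hm)).filter_mono inf_le_left] with x hx
    exact sub_neg.mpr hx
end

section
/- Let X and Y be Beta-distributed: X ∼ Beta(α₁, β₁), Y ∼ Beta(α₂, β₂). Then Y ≤_st X (i.e., the c.d.f. of X is pointwise ≤ the c.d.f. of Y on [0,1]) if and only if α₁ ≥ α₂ and β₁ ≤ β₂. -/
set_option maxHeartbeats 1000000
open MeasureTheory Set intervalIntegral

noncomputable def wfn (a b : ℝ) : ℝ → ℝ := fun t => t ^ (a-1) * (1-t) ^ (b-1)

lemma wInt01 {a b : ℝ} (ha : 0 < a) (hb : 0 < b) :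
    IntervalIntegrable (wfn a b) volume 0 1 := by
  have hL : IntervalIntegrable (wfn a b) volume 0 (1/2) := by
    apply (intervalIntegrable_rpow' (show (-1:ℝ) < a - 1 by linarith)).mul_continuousOn
    apply ContinuousOn.rpow_const (by fun_prop)
    intro t ht
    rw [uIcc_of_le (by norm_num : (0:ℝ) ≤ 1/2)] at ht
    exact Or.inl (by intro h; have := ht.2; norm_num at h; linarith)
  have hR : IntervalIntegrable (wfn a b) volume (1/2) 1 := by
    have h1 : IntervalIntegrable (fun t : ℝ => (1-t) ^ (b-1)) volume (1/2) 1 := by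
      have := (intervalIntegrable_rpow' (a := 0) (b := 1/2)
        (show (-1:ℝ) < b - 1 by linarith)).comp_sub_left 1
      norm_num at this
      exact this.symm
    apply h1.continuousOn_mul
    apply ContinuousOn.rpow_const (by fun_prop)
    intro t ht
    rw [uIcc_of_le (by norm_num : (1/2:ℝ) ≤ 1)] at ht
    exact Or.inl (by intro h; have := ht.1; norm_num at h; linarith)
  exact hL.trans hR

lemma wIntSub {a b x y : ℝ} (ha : 0 < a) (hb : 0 < b) (hx : x ∈ Icc (0:ℝ) 1)
    (hy : y ∈ Icc (0:ℝ) 1) : IntervalIntegrable (wfn a b) volume x y := by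
  apply (wInt01 ha hb).mono_set
  rw [uIcc_of_le (by norm_num : (0:ℝ) ≤ 1)]
  exact uIcc_subset_Icc hx hy

lemma wNonneg {a b x y : ℝ} (hx : 0 ≤ x) (hxy : x ≤ y) (hy : y ≤ 1) :
    0 ≤ ∫ t in x..y, wfn a b t := by
  apply intervalIntegral.integral_nonneg hxy
  intro t ht
  exact mul_nonneg (Real.rpow_nonneg (by linarith [ht.1]) _)
    (Real.rpow_nonneg (by linarith [ht.2]) _)

lemma wPos {a b x y : ℝ} (ha : 0 < a) (hb : 0 < b) (hx : 0 ≤ x) (hxy : x < y) (hy : y ≤ 1) :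
    0 < ∫ t in x..y, wfn a b t := by
  apply intervalIntegral.intervalIntegral_pos_of_pos_on
    (wIntSub ha hb ⟨hx, by linarith⟩ ⟨by linarith, hy⟩)
  · intro t ht
    exact mul_pos (Real.rpow_pos_of_pos (lt_of_le_of_lt hx ht.1) _)
      (Real.rpow_pos_of_pos (by linarith [ht.2]) _)
  · exact hxy

lemma myMono {f g : ℝ → ℝ} {x y c : ℝ} (hxy : x ≤ y)
    (hf : IntervalIntegrable f volume x y) (hg : IntervalIntegrable g volume x y)
    (h : ∀ t ∈ Set.Icc x y, t ≠ c → f t ≤ g t) :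
    ∫ t in x..y, f t ≤ ∫ t in x..y, g t := by
  apply intervalIntegral.integral_mono_ae_restrict hxy hf hg
  have h1 : ∀ᵐ t ∂(volume.restrict (Set.Icc x y)), t ∈ Set.Icc x y :=
    ae_restrict_mem measurableSet_Icc
  have h2 : ∀ᵐ t ∂(volume.restrict (Set.Icc x y)), t ≠ c := by
    refine ae_restrict_of_ae ?_
    rw [MeasureTheory.ae_iff]
    simpa using measure_singleton c
  filter_upwards [h1, h2] with t ht htc using h t ht htc

/-- generic cross lemma: if g ≤ c·f on [0,x] and c·f ≤ g on [x,1] (off one bad point each),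
then ∫₀ˣ g · ∫ₓ¹ f ≤ ∫₀ˣ f · ∫ₓ¹ g, and hence the CDF inequality. -/
lemma cross {f g : ℝ → ℝ} {x c : ℝ} (hx : x ∈ Icc (0:ℝ) 1) (hc : 0 ≤ c)
    (hf0 : IntervalIntegrable f volume 0 x) (hf1 : IntervalIntegrable f volume x 1)
    (hg0 : IntervalIntegrable g volume 0 x) (hg1 : IntervalIntegrable g volume x 1)
    (hfn0 : 0 ≤ ∫ t in (0:ℝ)..x, f t) (hfn1 : 0 ≤ ∫ t in x..(1:ℝ), f t)
    {p q : ℝ}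
    (hl : ∀ t ∈ Icc (0:ℝ) x, t ≠ p → g t ≤ c * f t)
    (hr : ∀ t ∈ Icc x (1:ℝ), t ≠ q → c * f t ≤ g t) :
    (∫ t in (0:ℝ)..x, g t) * (∫ t in x..(1:ℝ), f t)
      ≤ (∫ t in (0:ℝ)..x, f t) * (∫ t in x..(1:ℝ), g t) := by
  have h1 : (∫ t in (0:ℝ)..x, g t) ≤ c * ∫ t in (0:ℝ)..x, f t := by
    rw [← intervalIntegral.integral_const_mul]
    exact myMono hx.1 hg0 (hf0.const_mul c) hl
  have h2 : c * (∫ t in x..(1:ℝ), f t) ≤ ∫ t in x..(1:ℝ), g t := by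
    rw [← intervalIntegral.integral_const_mul]
    exact myMono hx.2 (hf1.const_mul c) hg1 hr
  calc (∫ t in (0:ℝ)..x, g t) * (∫ t in x..(1:ℝ), f t)
      ≤ (c * ∫ t in (0:ℝ)..x, f t) * (∫ t in x..(1:ℝ), f t) :=
        mul_le_mul_of_nonneg_right h1 hfn1
    _ = (∫ t in (0:ℝ)..x, f t) * (c * ∫ t in x..(1:ℝ), f t) := by ring
    _ ≤ (∫ t in (0:ℝ)..x, f t) * (∫ t in x..(1:ℝ), g t) :=
        mul_le_mul_of_nonneg_left h2 hfn0

/-- cross inequality, rephrased with full-interval integrals. -/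
lemma crossFull {f g : ℝ → ℝ} {x : ℝ} (hx : x ∈ Icc (0:ℝ) 1)
    (hf0 : IntervalIntegrable f volume 0 x) (hf1 : IntervalIntegrable f volume x 1)
    (hg0 : IntervalIntegrable g volume 0 x) (hg1 : IntervalIntegrable g volume x 1)
    (h : (∫ t in (0:ℝ)..x, g t) * (∫ t in x..(1:ℝ), f t)
      ≤ (∫ t in (0:ℝ)..x, f t) * (∫ t in x..(1:ℝ), g t)) :
    (∫ t in (0:ℝ)..x, g t) * (∫ t in (0:ℝ)..(1:ℝ), f t)
      ≤ (∫ t in (0:ℝ)..x, f t) * (∫ t in (0:ℝ)..(1:ℝ), g t) := by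
  rw [← intervalIntegral.integral_add_adjacent_intervals hf0 hf1,
      ← intervalIntegral.integral_add_adjacent_intervals hg0 hg1]
  nlinarith [h]

lemma step_alpha {a a' b : ℝ} (ha : 0 < a) (haa : a ≤ a') (hb : 0 < b) {x : ℝ}
    (hx : x ∈ Icc (0:ℝ) 1) :
    (∫ t in (0:ℝ)..x, wfn a' b t) * (∫ t in (0:ℝ)..(1:ℝ), wfn a b t)
      ≤ (∫ t in (0:ℝ)..x, wfn a b t) * (∫ t in (0:ℝ)..(1:ℝ), wfn a' b t) := by
  have ha' : 0 < a' := lt_of_lt_of_le ha haa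
  have h01 : (0:ℝ) ∈ Icc (0:ℝ) 1 := by norm_num
  have h11 : (1:ℝ) ∈ Icc (0:ℝ) 1 := by norm_num
  apply crossFull hx (wIntSub ha hb h01 hx) (wIntSub ha hb hx h11)
    (wIntSub ha' hb h01 hx) (wIntSub ha' hb hx h11)
  apply cross hx (Real.rpow_nonneg hx.1 (a' - a))
    (wIntSub ha hb h01 hx) (wIntSub ha hb hx h11)
    (wIntSub ha' hb h01 hx) (wIntSub ha' hb hx h11)
    (wNonneg le_rfl hx.1 hx.2) (wNonneg hx.1 hx.2 le_rfl) (p := 0) (q := 0)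
  · intro t ht ht0
    have htpos : 0 < t := lt_of_le_of_ne ht.1 (Ne.symm ht0)
    have key : t ^ (a' - 1) ≤ x ^ (a' - a) * t ^ (a - 1) := by
      have : t ^ (a' - 1) = t ^ (a' - a) * t ^ (a - 1) := by
        rw [← Real.rpow_add htpos]; ring_nf
      rw [this]
      exact mul_le_mul_of_nonneg_right
        (Real.rpow_le_rpow htpos.le ht.2 (by linarith)) (Real.rpow_nonneg htpos.le _)
    calc wfn a' b t = t ^ (a' - 1) * (1-t) ^ (b-1) := rfl
      _ ≤ (x ^ (a' - a) * t ^ (a - 1)) * (1-t) ^ (b-1) :=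
          mul_le_mul_of_nonneg_right key (Real.rpow_nonneg (by linarith [ht.2, hx.2]) _)
      _ = x ^ (a' - a) * wfn a b t := by rw [wfn]; ring
  · intro t ht ht0
    have htpos : 0 < t := lt_of_le_of_ne (le_trans hx.1 ht.1) (Ne.symm ht0)
    have key : x ^ (a' - a) * t ^ (a - 1) ≤ t ^ (a' - 1) := by
      have : t ^ (a' - 1) = t ^ (a' - a) * t ^ (a - 1) := by
        rw [← Real.rpow_add htpos]; ring_nf
      rw [this]
      exact mul_le_mul_of_nonneg_right
        (Real.rpow_le_rpow hx.1 ht.1 (by linarith)) (Real.rpow_nonneg htpos.le _)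
    calc x ^ (a' - a) * wfn a b t = (x ^ (a' - a) * t ^ (a - 1)) * (1-t) ^ (b-1) := by
          rw [wfn]; ring
      _ ≤ t ^ (a' - 1) * (1-t) ^ (b-1) :=
          mul_le_mul_of_nonneg_right key (Real.rpow_nonneg (by linarith [ht.2]) _)
      _ = wfn a' b t := rfl

lemma step_beta {a b b' : ℝ} (ha : 0 < a) (hb : 0 < b) (hbb : b ≤ b') {x : ℝ}
    (hx : x ∈ Icc (0:ℝ) 1) :
    (∫ t in (0:ℝ)..x, wfn a b t) * (∫ t in (0:ℝ)..(1:ℝ), wfn a b' t)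
      ≤ (∫ t in (0:ℝ)..x, wfn a b' t) * (∫ t in (0:ℝ)..(1:ℝ), wfn a b t) := by
  have hb' : 0 < b' := lt_of_lt_of_le hb hbb
  have h01 : (0:ℝ) ∈ Icc (0:ℝ) 1 := by norm_num
  have h11 : (1:ℝ) ∈ Icc (0:ℝ) 1 := by norm_num
  rcases eq_or_lt_of_le hx.2 with h1 | hxlt1
  · -- x = 1 : both sides equal
    subst h1
    nlinarith [mul_comm (∫ t in (0:ℝ)..(1:ℝ), wfn a b t) (∫ t in (0:ℝ)..(1:ℝ), wfn a b' t)]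
  apply crossFull hx (wIntSub ha hb' h01 hx) (wIntSub ha hb' hx h11)
    (wIntSub ha hb h01 hx) (wIntSub ha hb hx h11)
  apply cross hx (Real.rpow_nonneg (by linarith : (0:ℝ) ≤ 1 - x) (b - b'))
    (wIntSub ha hb' h01 hx) (wIntSub ha hb' hx h11)
    (wIntSub ha hb h01 hx) (wIntSub ha hb hx h11)
    (wNonneg le_rfl hx.1 hx.2) (wNonneg hx.1 hx.2 le_rfl) (p := 1) (q := 1)
  · intro t ht ht1
    have h1t : 0 < 1 - t := by
      rcases lt_or_eq_of_le (le_trans ht.2 hx.2) with h | h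
      · linarith
      · exact absurd h ht1
    have key : (1-t) ^ (b - 1) ≤ (1-x) ^ (b - b') * (1-t) ^ (b' - 1) := by
      have : (1-t) ^ (b - 1) = (1-t) ^ (b - b') * (1-t) ^ (b' - 1) := by
        rw [← Real.rpow_add h1t]; ring_nf
      rw [this]
      exact mul_le_mul_of_nonneg_right
        (Real.rpow_le_rpow_of_nonpos (by linarith) (by linarith [ht.2]) (by linarith))
        (Real.rpow_nonneg h1t.le _)
    calc wfn a b t = (1-t) ^ (b-1) * t ^ (a-1) := by rw [wfn]; ring
      _ ≤ ((1-x) ^ (b - b') * (1-t) ^ (b' - 1)) * t ^ (a-1) :=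
          mul_le_mul_of_nonneg_right key (Real.rpow_nonneg ht.1 _)
      _ = (1-x) ^ (b - b') * wfn a b' t := by rw [wfn]; ring
  · intro t ht ht1
    have h1t : 0 < 1 - t := by
      rcases lt_or_eq_of_le ht.2 with h | h
      · linarith
      · exact absurd h ht1
    have key : (1-x) ^ (b - b') * (1-t) ^ (b' - 1) ≤ (1-t) ^ (b - 1) := by
      have : (1-t) ^ (b - 1) = (1-t) ^ (b - b') * (1-t) ^ (b' - 1) := by
        rw [← Real.rpow_add h1t]; ring_nf
      rw [this]
      exact mul_le_mul_of_nonneg_right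
        (Real.rpow_le_rpow_of_nonpos h1t (by linarith [ht.1]) (by linarith))
        (Real.rpow_nonneg h1t.le _)
    calc (1-x) ^ (b - b') * wfn a b' t
        = ((1-x) ^ (b - b') * (1-t) ^ (b' - 1)) * t ^ (a-1) := by rw [wfn]; ring
      _ ≤ (1-t) ^ (b-1) * t ^ (a-1) :=
          mul_le_mul_of_nonneg_right key (Real.rpow_nonneg (le_trans hx.1 ht.1) _)
      _ = wfn a b t := by rw [wfn]; ring

/-- bounds for t^c on [1/2, 1] -/
lemma fbound (c : ℝ) {t : ℝ} (ht : t ∈ Icc (1/2:ℝ) 1) :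
    min 1 ((1/2:ℝ) ^ c) ≤ t ^ c ∧ t ^ c ≤ max 1 ((1/2:ℝ) ^ c) := by
  rcases le_total 0 c with h | h
  · constructor
    · exact le_trans (min_le_right _ _) (Real.rpow_le_rpow (by norm_num) ht.1 h)
    · exact le_trans (Real.rpow_le_one (by linarith [ht.1]) ht.2 h) (le_max_left _ _)
  · constructor
    · exact le_trans (min_le_left _ _)
        (Real.one_le_rpow_of_pos_of_le_one_of_nonpos (by linarith [ht.1]) ht.2 h)
    · exact le_trans (Real.rpow_le_rpow_of_nonpos (by norm_num) ht.1 h) (le_max_right _ _)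

lemma minpos (c : ℝ) : 0 < min 1 ((1/2:ℝ) ^ c) :=
  lt_min one_pos (Real.rpow_pos_of_pos (by norm_num) _)
lemma maxpos (c : ℝ) : 0 < max 1 ((1/2:ℝ) ^ c) := lt_of_lt_of_le one_pos (le_max_left _ _)

lemma int_rpow0 {a x : ℝ} (ha : 0 < a) (hx : 0 ≤ x) :
    ∫ t in (0:ℝ)..x, t ^ (a-1) = x ^ a / a := by
  rw [integral_rpow (Or.inl (by linarith))]
  rw [Real.zero_rpow (by linarith : a - 1 + 1 ≠ 0)]
  rw [show a - 1 + 1 = a by ring]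
  ring

lemma bounds0 {a b x : ℝ} (ha : 0 < a) (hb : 0 < b) (hx : x ∈ Ioc (0:ℝ) (1/2)) :
    min 1 ((1/2:ℝ) ^ (b-1)) * (x ^ a / a) ≤ (∫ t in (0:ℝ)..x, wfn a b t) ∧
    (∫ t in (0:ℝ)..x, wfn a b t) ≤ max 1 ((1/2:ℝ) ^ (b-1)) * (x ^ a / a) := by
  have hx1 : x ∈ Icc (0:ℝ) 1 := ⟨hx.1.le, by linarith [hx.2]⟩
  have hInt : IntervalIntegrable (wfn a b) volume 0 x :=
    wIntSub ha hb (by norm_num) hx1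
  have hIntr : IntervalIntegrable (fun t : ℝ => t ^ (a-1)) volume 0 x :=
    intervalIntegrable_rpow' (by linarith)
  have hpt : ∀ t ∈ Icc (0:ℝ) x,
      min 1 ((1/2:ℝ) ^ (b-1)) * t ^ (a-1) ≤ wfn a b t ∧
      wfn a b t ≤ max 1 ((1/2:ℝ) ^ (b-1)) * t ^ (a-1) := by
    intro t ht
    have h1t : (1 - t) ∈ Icc (1/2:ℝ) 1 := ⟨by linarith [ht.2, hx.2], by linarith [ht.1]⟩
    have hfb := fbound (b-1) h1t
    have htn : 0 ≤ t ^ (a-1) := Real.rpow_nonneg ht.1 _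
    constructor
    · calc min 1 ((1/2:ℝ) ^ (b-1)) * t ^ (a-1) = t ^ (a-1) * min 1 ((1/2:ℝ) ^ (b-1)) := by ring
        _ ≤ t ^ (a-1) * (1-t) ^ (b-1) := mul_le_mul_of_nonneg_left hfb.1 htn
    · calc wfn a b t = t ^ (a-1) * (1-t) ^ (b-1) := rfl
        _ ≤ t ^ (a-1) * max 1 ((1/2:ℝ) ^ (b-1)) := mul_le_mul_of_nonneg_left hfb.2 htn
        _ = max 1 ((1/2:ℝ) ^ (b-1)) * t ^ (a-1) := by ring
  constructor
  · calc min 1 ((1/2:ℝ) ^ (b-1)) * (x ^ a / a)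
        = ∫ t in (0:ℝ)..x, min 1 ((1/2:ℝ) ^ (b-1)) * t ^ (a-1) := by
          rw [intervalIntegral.integral_const_mul, int_rpow0 ha hx.1.le]
      _ ≤ ∫ t in (0:ℝ)..x, wfn a b t :=
          intervalIntegral.integral_mono_on hx.1.le (hIntr.const_mul _) hInt
            (fun t ht => (hpt t ht).1)
  · calc (∫ t in (0:ℝ)..x, wfn a b t)
        ≤ ∫ t in (0:ℝ)..x, max 1 ((1/2:ℝ) ^ (b-1)) * t ^ (a-1) :=
          intervalIntegral.integral_mono_on hx.1.le hInt (hIntr.const_mul _)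
            (fun t ht => (hpt t ht).2)
      _ = max 1 ((1/2:ℝ) ^ (b-1)) * (x ^ a / a) := by
          rw [intervalIntegral.integral_const_mul, int_rpow0 ha hx.1.le]

lemma int_rpow1 {b x : ℝ} (hb : 0 < b) (hx : x ≤ 1) :
    ∫ t in x..(1:ℝ), (1-t) ^ (b-1) = (1-x) ^ b / b := by
  have := intervalIntegral.integral_comp_sub_left (a := x) (b := 1)
    (fun s : ℝ => s ^ (b-1)) 1
  simp only [sub_self] at this
  rw [this, integral_rpow (Or.inl (by linarith))]
  rw [Real.zero_rpow (by linarith : b - 1 + 1 ≠ 0)]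
  rw [show b - 1 + 1 = b by ring]
  ring

lemma bounds1 {a b x : ℝ} (ha : 0 < a) (hb : 0 < b) (hx : x ∈ Ico (1/2:ℝ) 1) :
    min 1 ((1/2:ℝ) ^ (a-1)) * ((1-x) ^ b / b) ≤ (∫ t in x..(1:ℝ), wfn a b t) ∧
    (∫ t in x..(1:ℝ), wfn a b t) ≤ max 1 ((1/2:ℝ) ^ (a-1)) * ((1-x) ^ b / b) := by
  have hx1 : x ∈ Icc (0:ℝ) 1 := ⟨by linarith [hx.1], hx.2.le⟩
  have hInt : IntervalIntegrable (wfn a b) volume x 1 :=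
    wIntSub ha hb hx1 (by norm_num)
  have hIntr : IntervalIntegrable (fun t : ℝ => (1-t) ^ (b-1)) volume x 1 := by
    have := (intervalIntegrable_rpow' (a := 0) (b := 1-x)
      (show (-1:ℝ) < b - 1 by linarith)).comp_sub_left 1
    simp only [sub_zero, sub_sub_cancel] at this
    exact this.symm
  have hpt : ∀ t ∈ Icc x (1:ℝ),
      min 1 ((1/2:ℝ) ^ (a-1)) * (1-t) ^ (b-1) ≤ wfn a b t ∧
      wfn a b t ≤ max 1 ((1/2:ℝ) ^ (a-1)) * (1-t) ^ (b-1) := by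
    intro t ht
    have h1t : t ∈ Icc (1/2:ℝ) 1 := ⟨le_trans hx.1 ht.1, ht.2⟩
    have hfb := fbound (a-1) h1t
    have htn : 0 ≤ (1-t) ^ (b-1) := Real.rpow_nonneg (by linarith [ht.2]) _
    refine ⟨?_, ?_⟩
    · show min 1 ((1/2:ℝ) ^ (a-1)) * (1-t) ^ (b-1) ≤ t ^ (a-1) * (1-t) ^ (b-1)
      exact mul_le_mul_of_nonneg_right hfb.1 htn
    · show t ^ (a-1) * (1-t) ^ (b-1) ≤ max 1 ((1/2:ℝ) ^ (a-1)) * (1-t) ^ (b-1)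
      exact mul_le_mul_of_nonneg_right hfb.2 htn
  constructor
  · calc min 1 ((1/2:ℝ) ^ (a-1)) * ((1-x) ^ b / b)
        = ∫ t in x..(1:ℝ), min 1 ((1/2:ℝ) ^ (a-1)) * (1-t) ^ (b-1) := by
          rw [intervalIntegral.integral_const_mul, int_rpow1 hb hx.2.le]
      _ ≤ ∫ t in x..(1:ℝ), wfn a b t :=
          intervalIntegral.integral_mono_on hx1.2 (hIntr.const_mul _) hInt
            (fun t ht => (hpt t ht).1)
  · calc (∫ t in x..(1:ℝ), wfn a b t)
        ≤ ∫ t in x..(1:ℝ), max 1 ((1/2:ℝ) ^ (a-1)) * (1-t) ^ (b-1) :=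
          intervalIntegral.integral_mono_on hx1.2 hInt (hIntr.const_mul _)
            (fun t ht => (hpt t ht).2)
      _ = max 1 ((1/2:ℝ) ^ (a-1)) * ((1-x) ^ b / b) := by
          rw [intervalIntegral.integral_const_mul, int_rpow1 hb hx.2.le]

/-- if s^p ≤ C s^q for all small positive s, then q ≤ p -/
lemma rpow_compare {p q C : ℝ} (hC : 0 < C)
    (h : ∀ s ∈ Ioc (0:ℝ) (1/2), s ^ p ≤ C * s ^ q) : q ≤ p := by
  by_contra hpq
  push_neg at hpq
  have hc0 : p - q < 0 := by linarith
  have h' : ∀ s ∈ Ioc (0:ℝ) (1/2), s ^ (p - q) ≤ C := by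
    intro s hs
    have hs0 : 0 < s := hs.1
    rw [Real.rpow_sub hs0, div_le_iff₀ (Real.rpow_pos_of_pos hs0 q)]
    exact h s hs
  set L : ℝ := C + 1 with hL
  have hL1 : 1 < L := by linarith
  set s₀ : ℝ := L ^ (1/(p-q)) with hs₀
  have hs₀pos : 0 < s₀ := Real.rpow_pos_of_pos (by linarith) _
  set s : ℝ := min s₀ (1/2) with hsdef
  have hs : s ∈ Ioc (0:ℝ) (1/2) := ⟨lt_min hs₀pos (by norm_num), min_le_right _ _⟩
  have h1 : s₀ ^ (p-q) ≤ s ^ (p-q) :=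
    Real.rpow_le_rpow_of_nonpos hs.1 (min_le_left _ _) hc0.le
  have h2 : s₀ ^ (p-q) = L := by
    rw [hs₀, ← Real.rpow_mul (by linarith : (0:ℝ) ≤ L),
      one_div_mul_cancel (ne_of_lt hc0), Real.rpow_one]
  have := h' s hs
  rw [h2] at h1
  linarith

/-- For X ∼ Beta(α₁,β₁) and Y ∼ Beta(α₂,β₂): Y ≤_st X (F_X ≤ F_Y pointwise on [0,1])
iff α₁ ≥ α₂ and β₁ ≤ β₂. -/
theorem stmt_11 (α₁ β₁ α₂ β₂ : ℝ)
    (hα₁ : 0 < α₁) (hβ₁ : 0 < β₁) (hα₂ : 0 < α₂) (hβ₂ : 0 < β₂)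
    (F : ℝ → ℝ → ℝ → ℝ)
    (hF : ∀ α β x, F α β x = (∫ t in (0:ℝ)..x, t ^ (α - 1) * (1 - t) ^ (β - 1))
        / (∫ t in (0:ℝ)..1, t ^ (α - 1) * (1 - t) ^ (β - 1))) :
    (∀ x ∈ Set.Icc (0:ℝ) 1, F α₁ β₁ x ≤ F α₂ β₂ x) ↔ (α₂ ≤ α₁ ∧ β₁ ≤ β₂) := by
  have hFw : ∀ a b x, F a b x
      = (∫ t in (0:ℝ)..x, wfn a b t) / (∫ t in (0:ℝ)..1, wfn a b t) := hF
  have hB₁ : 0 < ∫ t in (0:ℝ)..1, wfn α₁ β₁ t := wPos hα₁ hβ₁ le_rfl one_pos le_rfl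
  have hB₂ : 0 < ∫ t in (0:ℝ)..1, wfn α₂ β₂ t := wPos hα₂ hβ₂ le_rfl one_pos le_rfl
  constructor
  · intro h
    constructor
    · -- α₂ ≤ α₁
      set m₁ : ℝ := min 1 ((1/2:ℝ) ^ (β₁-1)) with hm₁
      set M₂ : ℝ := max 1 ((1/2:ℝ) ^ (β₂-1)) with hM₂
      have hm₁pos : 0 < m₁ := minpos _
      have hM₂pos : 0 < M₂ := maxpos _
      set B₁ : ℝ := ∫ t in (0:ℝ)..1, wfn α₁ β₁ t with hB₁def
      set B₂ : ℝ := ∫ t in (0:ℝ)..1, wfn α₂ β₂ t with hB₂def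
      refine rpow_compare (C := M₂ * B₁ * α₁ / (m₁ * B₂ * α₂)) (by positivity) ?_
      intro s hs
      have hsI : s ∈ Set.Icc (0:ℝ) 1 := ⟨hs.1.le, by linarith [hs.2]⟩
      have hF12 := h s hsI
      rw [hFw, hFw] at hF12
      set N₁ : ℝ := ∫ t in (0:ℝ)..s, wfn α₁ β₁ t with hN₁def
      set N₂ : ℝ := ∫ t in (0:ℝ)..s, wfn α₂ β₂ t with hN₂def
      have hdiv : N₁ * B₂ ≤ N₂ * B₁ := (div_le_div_iff₀ hB₁ hB₂).mp hF12
      have hb1 := (bounds0 hα₁ hβ₁ hs).1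
      have hb2 := (bounds0 hα₂ hβ₂ hs).2
      rw [← mul_div_assoc, div_le_iff₀ hα₁] at hb1
      rw [← mul_div_assoc, le_div_iff₀ hα₂] at hb2
      rw [div_mul_eq_mul_div, le_div_iff₀ (by positivity)]
      nlinarith [mul_le_mul_of_nonneg_right hb1 (mul_pos hB₂ hα₂).le,
        mul_le_mul_of_nonneg_right hdiv (mul_pos hα₁ hα₂).le,
        mul_le_mul_of_nonneg_right hb2 (mul_pos hB₁ hα₁).le]
    · -- β₁ ≤ β₂
      set m₂ : ℝ := min 1 ((1/2:ℝ) ^ (α₂-1)) with hm₂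
      set M₁ : ℝ := max 1 ((1/2:ℝ) ^ (α₁-1)) with hM₁
      have hm₂pos : 0 < m₂ := minpos _
      have hM₁pos : 0 < M₁ := maxpos _
      set B₁ : ℝ := ∫ t in (0:ℝ)..1, wfn α₁ β₁ t with hB₁def
      set B₂ : ℝ := ∫ t in (0:ℝ)..1, wfn α₂ β₂ t with hB₂def
      refine rpow_compare (C := M₁ * B₂ * β₂ / (m₂ * B₁ * β₁)) (by positivity) ?_
      intro s hs
      set x : ℝ := 1 - s with hxdef
      have hxI : x ∈ Set.Icc (0:ℝ) 1 := ⟨by simp [hxdef]; linarith [hs.2], by simp [hxdef]; linarith [hs.1]⟩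
      have hxIco : x ∈ Set.Ico (1/2:ℝ) 1 := ⟨by simp [hxdef]; linarith [hs.2], by simp [hxdef]; exact hs.1⟩
      have hF12 := h x hxI
      rw [hFw, hFw] at hF12
      set N₁ : ℝ := ∫ t in (0:ℝ)..x, wfn α₁ β₁ t with hN₁def
      set N₂ : ℝ := ∫ t in (0:ℝ)..x, wfn α₂ β₂ t with hN₂def
      set T₁ : ℝ := ∫ t in x..(1:ℝ), wfn α₁ β₁ t with hT₁def
      set T₂ : ℝ := ∫ t in x..(1:ℝ), wfn α₂ β₂ t with hT₂def
      have hdiv : N₁ * B₂ ≤ N₂ * B₁ := (div_le_div_iff₀ hB₁ hB₂).mp hF12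
      have hsplit₁ : N₁ + T₁ = B₁ :=
        intervalIntegral.integral_add_adjacent_intervals
          (wIntSub hα₁ hβ₁ (by norm_num) hxI) (wIntSub hα₁ hβ₁ hxI (by norm_num))
      have hsplit₂ : N₂ + T₂ = B₂ :=
        intervalIntegral.integral_add_adjacent_intervals
          (wIntSub hα₂ hβ₂ (by norm_num) hxI) (wIntSub hα₂ hβ₂ hxI (by norm_num))
      have hTdiv : T₂ * B₁ ≤ T₁ * B₂ := by nlinarith [hdiv, hsplit₁, hsplit₂]
      have hb2 := (bounds1 hα₂ hβ₂ hxIco).1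
      have hb1 := (bounds1 hα₁ hβ₁ hxIco).2
      have hsx : (1:ℝ) - x = s := by rw [hxdef]; ring
      rw [hsx] at hb1 hb2
      rw [← mul_div_assoc, div_le_iff₀ hβ₂] at hb2
      rw [← mul_div_assoc, le_div_iff₀ hβ₁] at hb1
      rw [div_mul_eq_mul_div, le_div_iff₀ (by positivity)]
      nlinarith [mul_le_mul_of_nonneg_right hb2 (mul_pos hB₁ hβ₁).le,
        mul_le_mul_of_nonneg_right hTdiv (mul_pos hβ₁ hβ₂).le,
        mul_le_mul_of_nonneg_right hb1 (mul_pos hB₂ hβ₂).le]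
  · rintro ⟨h1, h2⟩ x hx
    rw [hFw, hFw]
    have hBm : 0 < ∫ t in (0:ℝ)..1, wfn α₂ β₁ t := wPos hα₂ hβ₁ le_rfl one_pos le_rfl
    have s1 : F α₁ β₁ x ≤ F α₂ β₁ x := by
      rw [hFw, hFw]
      exact (div_le_div_iff₀ hB₁ hBm).mpr (step_alpha hα₂ h1 hβ₁ hx)
    have s2 : F α₂ β₁ x ≤ F α₂ β₂ x := by
      rw [hFw, hFw]
      exact (div_le_div_iff₀ hBm hB₂).mpr (step_beta hα₂ hβ₁ h2 hx)
    rw [hFw, hFw] at s1 s2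
    exact le_trans s1 s2
end

section
/- Let f₁, f₂ be continuous probability densities on [0,1], positive on (0,1), with push-forward diffeomorphism y : (0,1) → (0,1) satisfying F₂(y(x)) = F₁(x). Suppose lim_{x→0⁺} y'(x) > 1 and lim_{x→1⁻} y'(x) > 1 (possibly +∞), and that f₁/f₂ has strictly positive second derivative on (0,1). Then y has exactly one fixed point x* in (0,1); moreover y(x) > x on (0, x*) and y(x) < x on (x*, 1), and f₁(x*) ≤ f₂(x*). -/
/-!
Put `g = F₁ - F₂`. Since `F₂` is strictly increasing and `F₂ ∘ y = F₁`, on `(0, 1)` the sign of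
`g` is that of `y - id`, so `y' > 1` at both ends makes `g > 0` near `0` and `g < 0` near `1`.
Convexity of `f₁ / f₂` makes `{g' < 0} = {f₁ / f₂ < 1}` an interval, so by the mean value
theorem `g` cannot fall, rise and fall again: it has a single zero `x*`, where it changes sign
from `+` to `-`, whence `g'(x*) = f₁(x*) - f₂(x*) ≤ 0`.
-/

open Set Filter Topology intervalIntegral

lemma hasDerivAt_integral_of_continuousOn {f : ℝ → ℝ} {a b x : ℝ}
    (hf : ContinuousOn f (Icc a b)) (hx : x ∈ Ioo a b) :
    HasDerivAt (fun u => ∫ t in a..u, f t) (f x) x :=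
  integral_hasDerivAt_right
    (hf.mono (uIcc_subset_Icc (left_mem_Icc.2 (hx.1.trans hx.2).le)
      (Ioo_subset_Icc_self hx))).intervalIntegrable
    ((hf.mono Ioo_subset_Icc_self).stronglyMeasurableAtFilter isOpen_Ioo x hx)
    (hf.continuousAt (Icc_mem_nhds hx.1 hx.2))

lemma strictMonoOn_integral_of_pos {f : ℝ → ℝ} {a b : ℝ}
    (hf : ContinuousOn f (Icc a b)) (hpos : ∀ x ∈ Ioo a b, 0 < f x) :
    StrictMonoOn (fun u => ∫ t in a..u, f t) (Ioo a b) := by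
  have hderiv : ∀ x ∈ Ioo a b, HasDerivAt (fun u => ∫ t in a..u, f t) (f x) x :=
    fun x hx => hasDerivAt_integral_of_continuousOn hf hx
  refine strictMonoOn_of_deriv_pos (convex_Ioo a b)
    (fun x hx => (hderiv x hx).continuousAt.continuousWithinAt) fun x hx => ?_
  rw [interior_Ioo] at hx
  exact (hderiv x hx).deriv ▸ hpos x hx

section Pushforward

variable {f₁ f₂ y : ℝ → ℝ} {a b x : ℝ}

lemma integral_sub_integral_pos_iff (h₂c : ContinuousOn f₂ (Icc a b))
    (h₂pos : ∀ x ∈ Ioo a b, 0 < f₂ x) (hx : x ∈ Ioo a b) (hyx : y x ∈ Ioo a b)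
    (hpush : ∫ t in a..y x, f₂ t = ∫ t in a..x, f₁ t) :
    0 < (∫ t in a..x, f₁ t) - ∫ t in a..x, f₂ t ↔ x < y x := by
  rw [← hpush, sub_pos]
  exact (strictMonoOn_integral_of_pos h₂c h₂pos).lt_iff_lt hx hyx

lemma integral_sub_integral_neg_iff (h₂c : ContinuousOn f₂ (Icc a b))
    (h₂pos : ∀ x ∈ Ioo a b, 0 < f₂ x) (hx : x ∈ Ioo a b) (hyx : y x ∈ Ioo a b)
    (hpush : ∫ t in a..y x, f₂ t = ∫ t in a..x, f₁ t) :
    (∫ t in a..x, f₁ t) - ∫ t in a..x, f₂ t < 0 ↔ y x < x := by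
  rw [← hpush, sub_neg]
  exact (strictMonoOn_integral_of_pos h₂c h₂pos).lt_iff_lt hyx hx

end Pushforward

lemma convex_setOf_sub_neg_of_deriv2_div_pos {f₁ f₂ : ℝ → ℝ} {a b : ℝ}
    (h₁c : ContinuousOn f₁ (Ioo a b)) (h₂c : ContinuousOn f₂ (Ioo a b))
    (h₂pos : ∀ x ∈ Ioo a b, 0 < f₂ x)
    (hratio : ∀ x ∈ Ioo a b, 0 < deriv (deriv (fun u => f₁ u / f₂ u)) x) :
    Convex ℝ {x ∈ Ioo a b | f₁ x - f₂ x < 0} := by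
  have hconvex : ConvexOn ℝ (Ioo a b) (fun u => f₁ u / f₂ u) := by
    refine (strictConvexOn_of_deriv2_pos (convex_Ioo a b) ?_ ?_).convexOn
    · exact h₁c.div h₂c fun x hx => (h₂pos x hx).ne'
    · simpa only [interior_Ioo, Function.iterate_succ, Function.iterate_zero,
        Function.comp_id, Function.comp_apply, id_eq] using hratio
  have hset : {x ∈ Ioo a b | f₁ x - f₂ x < 0} = {x ∈ Ioo a b | f₁ x / f₂ x < 1} := by
    ext x
    refine and_congr_right fun hx => ?_
    rw [sub_neg, div_lt_one (h₂pos x hx)]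
  exact hset ▸ hconvex.convex_lt 1

lemma exists_one_lt_eventually_le {α : Type*} {l : Filter α} {φ : α → ℝ}
    (h : (∃ L > 1, Tendsto φ l (𝓝 L)) ∨ Tendsto φ l atTop) :
    ∃ m, 1 < m ∧ ∀ᶠ x in l, m ≤ φ x := by
  rcases h with ⟨L, hL, hφ⟩ | hφ
  · exact ⟨(1 + L) / 2, by linarith, hφ.eventually (eventually_ge_nhds (by linarith))⟩
  · exact ⟨2, one_lt_two, hφ.eventually_ge_atTop 2⟩

section EndpointSlope

variable {y : ℝ → ℝ} {m : ℝ}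

-- With `t = x - (x - a) / m`, the mean value theorem gives `y x ≥ y t + (x - a) > x`.
lemma eventually_lt_apply_nhdsGT {a : ℝ} (hm : 1 < m)
    (hdiff : ∀ᶠ x in 𝓝[>] a, DifferentiableAt ℝ y x)
    (hderiv : ∀ᶠ x in 𝓝[>] a, m ≤ deriv y x) (hlow : ∀ᶠ x in 𝓝[>] a, a < y x) :
    ∀ᶠ x in 𝓝[>] a, x < y x := by
  obtain ⟨u, hau, hu⟩ := mem_nhdsGT_iff_exists_Ioo_subset.mp ((hdiff.and hderiv).and hlow)
  filter_upwards [Ioo_mem_nhdsGT hau] with x hx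
  set t := x - (x - a) / m
  have ht : t ∈ Ioo a x := by
    have : 0 < (x - a) / m := div_pos (sub_pos.2 hx.1) (by linarith)
    have : (x - a) / m < x - a := div_lt_self (sub_pos.2 hx.1) hm
    constructor <;> simp only [t] <;> linarith
  have hmvt := (convex_Ioo a u).mul_sub_le_image_sub_of_le_deriv
    (fun s hs => (hu hs).1.1.continuousAt.continuousWithinAt)
    (by rw [interior_Ioo]; exact fun s hs => (hu hs).1.1.differentiableWithinAt)
    (by rw [interior_Ioo]; exact fun s hs => (hu hs).1.2) t ⟨ht.1, ht.2.trans hx.2⟩ x hx ht.2.le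
  have hmt : m * (x - t) = x - a := by simp only [t]; field_simp; ring
  linarith [(hu ⟨ht.1, ht.2.trans hx.2⟩).2]

-- With `t = x + (b - x) / m`, the mean value theorem gives `y x ≤ y t - (b - x) < x`.
lemma eventually_apply_lt_nhdsLT {b : ℝ} (hm : 1 < m)
    (hdiff : ∀ᶠ x in 𝓝[<] b, DifferentiableAt ℝ y x)
    (hderiv : ∀ᶠ x in 𝓝[<] b, m ≤ deriv y x) (hup : ∀ᶠ x in 𝓝[<] b, y x < b) :
    ∀ᶠ x in 𝓝[<] b, y x < x := by
  obtain ⟨l, hlb, hl⟩ := mem_nhdsLT_iff_exists_Ioo_subset.mp ((hdiff.and hderiv).and hup)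
  filter_upwards [Ioo_mem_nhdsLT hlb] with x hx
  set t := x + (b - x) / m
  have ht : t ∈ Ioo x b := by
    have : 0 < (b - x) / m := div_pos (sub_pos.2 hx.2) (by linarith)
    have : (b - x) / m < b - x := div_lt_self (sub_pos.2 hx.2) hm
    constructor <;> simp only [t] <;> linarith
  have hmvt := (convex_Ioo l b).mul_sub_le_image_sub_of_le_deriv
    (fun s hs => (hl hs).1.1.continuousAt.continuousWithinAt)
    (by rw [interior_Ioo]; exact fun s hs => (hl hs).1.1.differentiableWithinAt)
    (by rw [interior_Ioo]; exact fun s hs => (hl hs).1.2) x hx t ⟨hx.1.trans ht.1, ht.2⟩ ht.1.le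
  have hmt : m * (t - x) = b - x := by simp only [t]; field_simp; ring
  linarith [(hl ⟨hx.1.trans ht.1, ht.2⟩).2]

end EndpointSlope

section SignChange

variable {g g' : ℝ → ℝ} {a b : ℝ}

-- The mean value theorem puts negative, nonnegative and negative values of `g'` in this order
-- on `(w, x)`, `(x, v)` and `(v, z)`, against convexity of `{g' < 0}`.
lemma apply_lt_apply_of_convex_deriv_neg (hg : ∀ x ∈ Ioo a b, HasDerivAt g (g' x) x)
    (hneg : Convex ℝ {x ∈ Ioo a b | g' x < 0}) {w x v z : ℝ} (haw : a < w) (hwx : w < x)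
    (hxv : x < v) (hvz : v < z) (hzb : z < b) (hw : g x < g w) (hz : g z < g v) :
    g v < g x := by
  have mvt : ∀ p q, a < p → p < q → q < b → ∃ c ∈ Ioo p q, g' c = (g q - g p) / (q - p) :=
    fun p q hap hpq hqb => exists_hasDerivAt_eq_slope g g' hpq
      (fun s hs => (hg s ⟨hap.trans_le hs.1, hs.2.trans_lt hqb⟩).continuousAt.continuousWithinAt)
      (fun s hs => hg s ⟨hap.trans hs.1, hs.2.trans hqb⟩)
  obtain ⟨c₁, hc₁, hc₁'⟩ := mvt w x haw hwx (hxv.trans (hvz.trans hzb))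
  obtain ⟨c₂, hc₂, hc₂'⟩ := mvt x v (haw.trans hwx) hxv (hvz.trans hzb)
  obtain ⟨c₃, hc₃, hc₃'⟩ := mvt v z (haw.trans (hwx.trans hxv)) hvz hzb
  have hc₁neg : c₁ ∈ {x ∈ Ioo a b | g' x < 0} :=
    ⟨⟨haw.trans hc₁.1, hc₁.2.trans (hxv.trans (hvz.trans hzb))⟩,
      hc₁' ▸ div_neg_of_neg_of_pos (by linarith) (by linarith)⟩
  have hc₃neg : c₃ ∈ {x ∈ Ioo a b | g' x < 0} :=
    ⟨⟨haw.trans (hwx.trans (hxv.trans hc₃.1)), hc₃.2.trans hzb⟩,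
      hc₃' ▸ div_neg_of_neg_of_pos (by linarith) (by linarith)⟩
  have hc₂neg : g' c₂ < 0 :=
    (hneg.ordConnected.out hc₁neg hc₃neg ⟨(hc₁.2.trans hc₂.1).le, (hc₂.2.trans hc₃.1).le⟩).2
  by_contra! hle
  exact hc₂neg.not_ge (hc₂' ▸ div_nonneg (by linarith) (by linarith))
theorem exists_sign_change_of_convex_deriv_neg (hab : a < b)
    (hg : ∀ x ∈ Ioo a b, HasDerivAt g (g' x) x) (hneg : Convex ℝ {x ∈ Ioo a b | g' x < 0})
    (hga : ∀ᶠ x in 𝓝[>] a, 0 < g x) (hgb : ∀ᶠ x in 𝓝[<] b, g x < 0) :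
    ∃ c ∈ Ioo a b, g c = 0 ∧ (∀ x ∈ Ioo a c, 0 < g x) ∧ (∀ x ∈ Ioo c b, g x < 0) ∧
      g' c ≤ 0 := by
  have pos_before : ∀ x, a < x → ∃ w ∈ Ioo a x, 0 < g w := fun x hx =>
    (hga.and (Ioo_mem_nhdsGT hx)).exists.imp fun w hw => ⟨hw.2, hw.1⟩
  have neg_after : ∀ x, x < b → ∃ z ∈ Ioo x b, g z < 0 := fun x hx =>
    (hgb.and (Ioo_mem_nhdsLT hx)).exists.imp fun z hz => ⟨hz.2, hz.1⟩
  obtain ⟨p, hp, hgp⟩ := pos_before b hab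
  obtain ⟨q, hq, hgq⟩ := neg_after p hp.2
  obtain ⟨c, hc, hgc⟩ : ∃ c ∈ Icc p q, g c = 0 :=
    intermediate_value_Icc' hq.1.le
      (fun s hs => (hg s ⟨hp.1.trans_le hs.1, hs.2.trans_lt hq.2⟩).continuousAt.continuousWithinAt)
      ⟨hgq.le, hgp.le⟩
  have hcab : c ∈ Ioo a b := ⟨hp.1.trans_le hc.1, hc.2.trans_lt hq.2⟩
  have pos_left : ∀ x ∈ Ioo a c, 0 < g x := by
    intro x hx
    by_contra! hgx
    obtain ⟨w, hw, hgw⟩ := pos_before x hx.1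
    obtain ⟨z, hz, hgz⟩ := neg_after c hcab.2
    have := apply_lt_apply_of_convex_deriv_neg hg hneg hw.1 hw.2 hx.2 hz.1 hz.2
      (by linarith) (by linarith)
    linarith
  have neg_right : ∀ x ∈ Ioo c b, g x < 0 := by
    intro x hx
    by_contra! hgx
    obtain ⟨w, hw, hgw⟩ := pos_before c hcab.1
    obtain ⟨z, hz, hgz⟩ := neg_after x hx.2
    have := apply_lt_apply_of_convex_deriv_neg hg hneg hw.1 hw.2 hx.1 hz.1 hz.2
      (by linarith) (by linarith)
    linarith
  refine ⟨c, hcab, hgc, pos_left, neg_right, ?_⟩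
  refine le_of_tendsto (hg c hcab).tendsto_slope_zero_right ?_
  filter_upwards [Ioo_mem_nhdsGT (sub_pos.2 hcab.2)] with t ht
  have : g (c + t) < 0 := neg_right _ ⟨by linarith [ht.1], by linarith [ht.2]⟩
  rw [hgc, sub_zero, smul_eq_mul]
  exact mul_nonpos_of_nonneg_of_nonpos (inv_nonneg.2 ht.1.le) this.le

end SignChange

theorem stmt_14_general (f₁ f₂ : ℝ → ℝ)
    (h₁c : ContinuousOn f₁ (Set.Icc 0 1)) (h₂c : ContinuousOn f₂ (Set.Icc 0 1))
    (h₂pos : ∀ x ∈ Set.Ioo (0:ℝ) 1, 0 < f₂ x)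
    (y : ℝ → ℝ)
    (hymaps : ∀ x ∈ Set.Ioo (0:ℝ) 1, y x ∈ Set.Ioo (0:ℝ) 1)
    (hydiff : ∀ x ∈ Set.Ioo (0:ℝ) 1, DifferentiableAt ℝ y x)
    (hypush : ∀ x ∈ Set.Ioo (0:ℝ) 1,
        (∫ t in (0:ℝ)..(y x), f₂ t) = ∫ t in (0:ℝ)..x, f₁ t)
    (hlim0 : (∃ L > 1, Filter.Tendsto (deriv y) (nhdsWithin 0 (Set.Ioi 0)) (nhds L)) ∨
        Filter.Tendsto (deriv y) (nhdsWithin 0 (Set.Ioi 0)) Filter.atTop)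
    (hlim1 : (∃ L > 1, Filter.Tendsto (deriv y) (nhdsWithin 1 (Set.Iio 1)) (nhds L)) ∨
        Filter.Tendsto (deriv y) (nhdsWithin 1 (Set.Iio 1)) Filter.atTop)
    (hratio : ∀ x ∈ Set.Ioo (0:ℝ) 1,
        0 < deriv (deriv (fun u => f₁ u / f₂ u)) x) :
    ∃ xstar ∈ Set.Ioo (0:ℝ) 1, y xstar = xstar ∧
      (∀ x ∈ Set.Ioo (0:ℝ) 1, y x = x → x = xstar) ∧
      (∀ x ∈ Set.Ioo (0:ℝ) xstar, y x > x) ∧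
      (∀ x ∈ Set.Ioo xstar (1:ℝ), y x < x) ∧
      f₁ xstar ≤ f₂ xstar := by
  set g : ℝ → ℝ := fun u => (∫ t in (0:ℝ)..u, f₁ t) - ∫ t in (0:ℝ)..u, f₂ t
  have hg_pos : ∀ x ∈ Ioo (0:ℝ) 1, 0 < g x ↔ x < y x := fun x hx =>
    integral_sub_integral_pos_iff h₂c h₂pos hx (hymaps x hx) (hypush x hx)
  have hg_neg : ∀ x ∈ Ioo (0:ℝ) 1, g x < 0 ↔ y x < x := fun x hx =>
    integral_sub_integral_neg_iff h₂c h₂pos hx (hymaps x hx) (hypush x hx)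
  have hI₀ : ∀ᶠ x in 𝓝[>] (0:ℝ), x ∈ Ioo (0:ℝ) 1 := Ioo_mem_nhdsGT one_pos
  have hI₁ : ∀ᶠ x in 𝓝[<] (1:ℝ), x ∈ Ioo (0:ℝ) 1 := Ioo_mem_nhdsLT one_pos
  obtain ⟨m₀, hm₀, hderiv₀⟩ := exists_one_lt_eventually_le hlim0
  obtain ⟨m₁, hm₁, hderiv₁⟩ := exists_one_lt_eventually_le hlim1
  have near₀ : ∀ᶠ x in 𝓝[>] (0:ℝ), 0 < g x := by
    filter_upwards [hI₀, eventually_lt_apply_nhdsGT hm₀ (hI₀.mono hydiff) hderiv₀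
      (hI₀.mono fun x hx => (hymaps x hx).1)] with x hx hxy using (hg_pos x hx).2 hxy
  have near₁ : ∀ᶠ x in 𝓝[<] (1:ℝ), g x < 0 := by
    filter_upwards [hI₁, eventually_apply_lt_nhdsLT hm₁ (hI₁.mono hydiff) hderiv₁
      (hI₁.mono fun x hx => (hymaps x hx).2)] with x hx hxy using (hg_neg x hx).2 hxy
  obtain ⟨c, hc, hgc, hleft, hright, hfc⟩ := exists_sign_change_of_convex_deriv_neg (g := g)
    one_pos (fun x hx => (hasDerivAt_integral_of_continuousOn h₁c hx).sub
      (hasDerivAt_integral_of_continuousOn h₂c hx))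
    (convex_setOf_sub_neg_of_deriv2_div_pos (h₁c.mono Ioo_subset_Icc_self)
      (h₂c.mono Ioo_subset_Icc_self) h₂pos hratio) near₀ near₁
  have above : ∀ x ∈ Ioo 0 c, x < y x :=
    fun x hx => (hg_pos x ⟨hx.1, hx.2.trans hc.2⟩).1 (hleft x hx)
  have below : ∀ x ∈ Ioo c 1, y x < x :=
    fun x hx => (hg_neg x ⟨hc.1.trans hx.1, hx.2⟩).1 (hright x hx)
  have fixed : y c = c := ((lt_trichotomy (y c) c).resolve_left fun h =>
    ((hg_neg c hc).2 h).ne hgc).resolve_right fun h => ((hg_pos c hc).2 h).ne' hgc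
  refine ⟨c, hc, fixed, fun x hx hyx => ?_, above, below, by linarith⟩
  rcases lt_trichotomy x c with hxc | rfl | hcx
  · exact absurd hyx (above x ⟨hx.1, hxc⟩).ne'
  · rfl
  · exact absurd hyx (below x ⟨hcx, hx.2⟩).ne

/-- If the push-forward map y of two smooth densities has derivative limits greater than 1
(possibly ∞) at both endpoints and f₁/f₂ has strictly positive second derivative, then y has
a unique interior fixed point x*, with y > id before it and y < id after it, and
f₁(x*) ≤ f₂(x*). -/
theorem stmt_14 (f₁ f₂ : ℝ → ℝ)
    (h₁c : ContinuousOn f₁ (Set.Icc 0 1)) (h₂c : ContinuousOn f₂ (Set.Icc 0 1))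
    (h₁pos : ∀ x ∈ Set.Ioo (0:ℝ) 1, 0 < f₁ x)
    (h₂pos : ∀ x ∈ Set.Ioo (0:ℝ) 1, 0 < f₂ x)
    (h₁1 : ∫ x in (0:ℝ)..1, f₁ x = 1) (h₂1 : ∫ x in (0:ℝ)..1, f₂ x = 1)
    (y : ℝ → ℝ)
    (hymaps : ∀ x ∈ Set.Ioo (0:ℝ) 1, y x ∈ Set.Ioo (0:ℝ) 1)
    (hymono : StrictMonoOn y (Set.Ioo (0:ℝ) 1))
    (hydiff : ∀ x ∈ Set.Ioo (0:ℝ) 1, DifferentiableAt ℝ y x)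
    (hypush : ∀ x ∈ Set.Ioo (0:ℝ) 1,
        (∫ t in (0:ℝ)..(y x), f₂ t) = ∫ t in (0:ℝ)..x, f₁ t)
    (hyderiv : ∀ x ∈ Set.Ioo (0:ℝ) 1, deriv y x = f₁ x / f₂ (y x))
    (hlim0 : (∃ L > 1, Filter.Tendsto (deriv y) (nhdsWithin 0 (Set.Ioi 0)) (nhds L)) ∨
        Filter.Tendsto (deriv y) (nhdsWithin 0 (Set.Ioi 0)) Filter.atTop)
    (hlim1 : (∃ L > 1, Filter.Tendsto (deriv y) (nhdsWithin 1 (Set.Iio 1)) (nhds L)) ∨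
        Filter.Tendsto (deriv y) (nhdsWithin 1 (Set.Iio 1)) Filter.atTop)
    (hratio : ∀ x ∈ Set.Ioo (0:ℝ) 1,
        0 < deriv (deriv (fun u => f₁ u / f₂ u)) x) :
    ∃ xstar ∈ Set.Ioo (0:ℝ) 1, y xstar = xstar ∧
      (∀ x ∈ Set.Ioo (0:ℝ) 1, y x = x → x = xstar) ∧
      (∀ x ∈ Set.Ioo (0:ℝ) xstar, y x > x) ∧
      (∀ x ∈ Set.Ioo xstar (1:ℝ), y x < x) ∧
      f₁ xstar ≤ f₂ xstar :=
  stmt_14_general f₁ f₂ h₁c h₂c h₂pos y hymaps hydiff hypush hlim0 hlim1 hratio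
end

section
/- Fix n, m > 0 and 0 < a₁ < a₂. Let y : (0,1) → (0,1) be the push-forward map defined by F_{a₂}(y(x)) = F_{a₁}(x), where F_a is the Beta(na, ma) c.d.f. Then lim_{x→0⁺} y'(x) = +∞ and lim_{x→1⁻} y'(x) = +∞. -/
/-!
Write `k_{α,β}(t) = t^(α-1) (1-t)^(β-1)` and `B(x; α, β) = ∫₀ˣ k_{α,β}` for the incomplete Beta
function, so that `F_a = B(·; n a, m a) / B(1; n a, m a)`. With `αᵢ = n aᵢ`, `βᵢ = m aᵢ` and
`R = B(1; α₂, β₂) / B(1; α₁, β₁)` the hypotheses read `B(y x; α₂, β₂) = R B(x; α₁, β₁)` and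
`y' = R k_{α₁,β₁}(x) / k_{α₂,β₂}(y x)`.

Near `0` we have `k_{α,β}(t) ≍ t^(α-1)`, hence `B(x; α, β) ≍ x^α`. The push-forward identity then
forces `y x → 0` and `y x ≍ x^(α₁/α₂)`, so `y' ≍ x^(α₁-1) / x^((α₁/α₂)(α₂-1)) = x^(α₁/α₂ - 1)`,
which tends to `+∞` since `α₁ < α₂`. The endpoint `1` is the endpoint `0` of the reflected map
`x ↦ 1 - y (1 - x)`, which pushes `Beta(β₁, α₁)` forward to `Beta(β₂, α₂)`, again with `β₁ < β₂`.
-/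

open Filter Set Asymptotics MeasureTheory Topology

noncomputable def betaKernel (α β t : ℝ) : ℝ := t ^ (α - 1) * (1 - t) ^ (β - 1)

noncomputable def incBeta (α β x : ℝ) : ℝ := ∫ t in (0 : ℝ)..x, betaKernel α β t

lemma betaKernel_one_sub (α β t : ℝ) : betaKernel α β (1 - t) = betaKernel β α t := by
  rw [betaKernel, betaKernel, sub_sub_cancel, mul_comm]

lemma incBeta_zero (α β : ℝ) : incBeta α β 0 = 0 := intervalIntegral.integral_same

section BetaKernel

variable {α β : ℝ}

lemma betaKernel_pos {t : ℝ} (ht : t ∈ Ioo 0 1) : 0 < betaKernel α β t :=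
  mul_pos (Real.rpow_pos_of_pos ht.1 _) (Real.rpow_pos_of_pos (sub_pos.2 ht.2) _)

lemma betaKernel_nonneg {t : ℝ} (ht : t ∈ Icc 0 1) : 0 ≤ betaKernel α β t :=
  mul_nonneg (Real.rpow_nonneg ht.1 _) (Real.rpow_nonneg (sub_nonneg.2 ht.2) _)

lemma intervalIntegrable_betaKernel_zero_half (hα : 0 < α) :
    IntervalIntegrable (betaKernel α β) volume 0 (1 / 2) := by
  refine (intervalIntegral.intervalIntegrable_rpow' (by linarith)).mul_continuousOn
    (ContinuousOn.rpow_const (by fun_prop) fun t ht => Or.inl ?_)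
  rw [uIcc_of_le (by norm_num)] at ht
  linarith [ht.2]

lemma intervalIntegrable_betaKernel (hα : 0 < α) (hβ : 0 < β) {c d : ℝ}
    (hc : c ∈ Icc (0 : ℝ) 1) (hd : d ∈ Icc (0 : ℝ) 1) :
    IntervalIntegrable (betaKernel α β) volume c d := by
  have hright : IntervalIntegrable (betaKernel α β) volume (1 / 2) 1 := by
    have h := (intervalIntegrable_betaKernel_zero_half (β := α) hβ).comp_sub_left 1
    simp only [betaKernel_one_sub] at h
    norm_num at h
    exact h.symm
  refine ((intervalIntegrable_betaKernel_zero_half hα).trans hright).mono_set ?_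
  rw [uIcc_of_le zero_le_one]
  exact uIcc_subset_Icc hc hd

lemma incBeta_pos (hα : 0 < α) (hβ : 0 < β) {x : ℝ} (hx : x ∈ Ioc (0 : ℝ) 1) :
    0 < incBeta α β x :=
  intervalIntegral.intervalIntegral_pos_of_pos_on
    (intervalIntegrable_betaKernel hα hβ (left_mem_Icc.2 zero_le_one) (Ioc_subset_Icc_self hx))
    (fun _ ht => betaKernel_pos ⟨ht.1, ht.2.trans_le hx.2⟩) hx.1

lemma incBeta_le_incBeta (hα : 0 < α) (hβ : 0 < β) {x x' : ℝ} (hx : 0 ≤ x) (hxx' : x ≤ x')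
    (hx' : x' ≤ 1) : incBeta α β x ≤ incBeta α β x' := by
  have hmem : ∀ {s}, 0 ≤ s → s ≤ 1 → s ∈ Icc (0 : ℝ) 1 := fun h h' => ⟨h, h'⟩
  rw [incBeta, incBeta, ← intervalIntegral.integral_add_adjacent_intervals
    (intervalIntegrable_betaKernel hα hβ (hmem le_rfl zero_le_one) (hmem hx (hxx'.trans hx')))
    (intervalIntegrable_betaKernel hα hβ (hmem hx (hxx'.trans hx')) (hmem (hx.trans hxx') hx'))]
  exact le_add_of_nonneg_right (intervalIntegral.integral_nonneg hxx' fun t ht =>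
    betaKernel_nonneg ⟨hx.trans ht.1, ht.2.trans hx'⟩)

lemma incBeta_one_sub (hα : 0 < α) (hβ : 0 < β) {s : ℝ} (hs : s ∈ Icc (0 : ℝ) 1) :
    incBeta α β (1 - s) = incBeta α β 1 - incBeta β α s := by
  have h1s : 1 - s ∈ Icc (0 : ℝ) 1 := ⟨sub_nonneg.2 hs.2, sub_le_self _ hs.1⟩
  have htail : ∫ t in (1 - s)..1, betaKernel α β t = incBeta β α s := by
    simp_rw [incBeta, ← betaKernel_one_sub α β]
    rw [intervalIntegral.integral_comp_sub_left (betaKernel α β), sub_zero]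
  rw [← htail, incBeta, incBeta, ← intervalIntegral.integral_add_adjacent_intervals
    (intervalIntegrable_betaKernel hα hβ (left_mem_Icc.2 zero_le_one) h1s)
    (intervalIntegrable_betaKernel hα hβ h1s (right_mem_Icc.2 zero_le_one))]
  ring

lemma incBeta_one_symm (hα : 0 < α) (hβ : 0 < β) : incBeta β α 1 = incBeta α β 1 := by
  have h := incBeta_one_sub hα hβ (right_mem_Icc.2 zero_le_one)
  rw [sub_self, incBeta_zero] at h
  linarith

end BetaKernel

lemma isBigO_intervalIntegral_nhdsGT_zero {f g : ℝ → ℝ}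
    (hf : ∀ᶠ x in 𝓝[>] 0, IntervalIntegrable f volume 0 x)
    (hg : ∀ᶠ x in 𝓝[>] 0, IntervalIntegrable g volume 0 x)
    (hg₀ : ∀ᶠ t in 𝓝[>] 0, 0 ≤ g t) (hfg : f =O[𝓝[>] 0] g) :
    (fun x => ∫ t in (0 : ℝ)..x, f t) =O[𝓝[>] 0] fun x => ∫ t in (0 : ℝ)..x, g t := by
  obtain ⟨c, hc, hcfg⟩ := hfg.exists_pos
  obtain ⟨ε, hε, hbound⟩ := mem_nhdsGT_iff_exists_Ioo_subset.1 <|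
    (hcfg.bound.and hg₀).mono fun t ht => show |f t| ≤ c * g t by
      simpa [Real.norm_eq_abs, abs_of_nonneg ht.2] using ht.1
  refine IsBigO.of_bound c ?_
  filter_upwards [Ioo_mem_nhdsGT hε, hf, hg] with x hx hfx hgx
  calc ‖∫ t in (0 : ℝ)..x, f t‖ ≤ ∫ t in (0 : ℝ)..x, |f t| :=
        intervalIntegral.abs_integral_le_integral_abs hx.1.le
    _ ≤ ∫ t in (0 : ℝ)..x, c * g t :=
        intervalIntegral.integral_mono_on_of_le_Ioo hx.1.le hfx.abs (hgx.const_mul c)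
          fun t ht => hbound ⟨ht.1, ht.2.trans hx.2⟩
    _ ≤ c * ‖∫ t in (0 : ℝ)..x, g t‖ := by
        rw [intervalIntegral.integral_const_mul]
        exact mul_le_mul_of_nonneg_left (Real.le_norm_self _) hc.le

lemma isTheta_intervalIntegral_nhdsGT_zero {f g : ℝ → ℝ}
    (hf : ∀ᶠ x in 𝓝[>] 0, IntervalIntegrable f volume 0 x)
    (hg : ∀ᶠ x in 𝓝[>] 0, IntervalIntegrable g volume 0 x)
    (hf₀ : ∀ᶠ t in 𝓝[>] 0, 0 ≤ f t) (hg₀ : ∀ᶠ t in 𝓝[>] 0, 0 ≤ g t) (hfg : f =Θ[𝓝[>] 0] g) :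
    (fun x => ∫ t in (0 : ℝ)..x, f t) =Θ[𝓝[>] 0] fun x => ∫ t in (0 : ℝ)..x, g t :=
  ⟨isBigO_intervalIntegral_nhdsGT_zero hf hg hg₀ hfg.1,
    isBigO_intervalIntegral_nhdsGT_zero hg hf hf₀ hfg.2⟩

lemma tendsto_atTop_of_isBigO {ι : Type*} {l : Filter ι} {f g : ι → ℝ}
    (hgf : g =O[l] f) (hf : ∀ᶠ i in l, 0 ≤ f i) (hg : Tendsto g l atTop) :
    Tendsto f l atTop := by
  obtain ⟨c, hc, hbound⟩ := hgf.exists_pos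
  refine tendsto_atTop_mono' l ?_ (hg.atTop_div_const hc)
  filter_upwards [hbound.bound, hf, hg.eventually_ge_atTop 0] with i hi hfi hgi
  rw [Real.norm_of_nonneg hfi, Real.norm_of_nonneg hgi] at hi
  rwa [div_le_iff₀' hc]

lemma betaKernel_isTheta (α β : ℝ) :
    betaKernel α β =Θ[𝓝[>] 0] fun t => t ^ (α - 1) := by
  have h : (fun t : ℝ => (1 - t) ^ (β - 1)) ~[𝓝[>] 0] fun _ => (1 : ℝ) := by
    refine (isEquivalent_const_iff_tendsto one_ne_zero).2 (tendsto_nhdsWithin_of_tendsto_nhds ?_)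
    have hcont : ContinuousAt (fun t : ℝ => (1 - t) ^ (β - 1)) 0 :=
      (continuousAt_const.sub continuousAt_id).rpow_const (Or.inl (by norm_num))
    simpa using hcont.tendsto
  have := ((IsEquivalent.refl (u := fun t : ℝ => t ^ (α - 1))).mul h).isTheta
  unfold betaKernel
  simpa only [Pi.mul_def, mul_one] using this

section BetaAsymptotics

variable {α β : ℝ}

lemma incBeta_isTheta (hα : 0 < α) (hβ : 0 < β) :
    incBeta α β =Θ[𝓝[>] 0] fun x => x ^ α := by
  have hunit : Ioo (0 : ℝ) 1 ∈ 𝓝[>] 0 := Ioo_mem_nhdsGT one_pos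
  have hpow : (fun x => ∫ t in (0 : ℝ)..x, t ^ (α - 1)) = fun x => α⁻¹ * x ^ α := by
    ext x
    rw [integral_rpow (Or.inl (by linarith)), sub_add_cancel, Real.zero_rpow hα.ne', sub_zero,
      div_eq_inv_mul]
  have h := isTheta_intervalIntegral_nhdsGT_zero
    (mem_of_superset hunit fun x hx => intervalIntegrable_betaKernel (β := β) hα hβ
      (left_mem_Icc.2 zero_le_one) (Ioo_subset_Icc_self hx))
    (Eventually.of_forall fun x => intervalIntegral.intervalIntegrable_rpow' (by linarith))
    (mem_of_superset hunit fun t ht => betaKernel_nonneg (Ioo_subset_Icc_self ht))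
    (eventually_nhdsWithin_of_forall fun t ht => Real.rpow_nonneg (le_of_lt ht) _)
    (betaKernel_isTheta α β)
  rw [hpow] at h
  exact h.trans ((isTheta_const_mul_left (inv_ne_zero hα.ne')).2 (isTheta_refl _ _))

lemma tendsto_incBeta_nhdsGT_zero (hα : 0 < α) (hβ : 0 < β) :
    Tendsto (incBeta α β) (𝓝[>] 0) (𝓝 0) := by
  refine (incBeta_isTheta hα hβ).1.trans_tendsto ?_
  simpa [Real.zero_rpow hα.ne'] using
    ((Real.continuousAt_rpow_const 0 α (Or.inr hα.le)).tendsto).mono_left nhdsWithin_le_nhds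

lemma tendsto_nhdsGT_zero_of_incBeta_comp {ι : Type*} {l : Filter ι} {y : ι → ℝ}
    (hα : 0 < α) (hβ : 0 < β) (hy : ∀ᶠ i in l, y i ∈ Ioo 0 1)
    (h : Tendsto (fun i => incBeta α β (y i)) l (𝓝 0)) : Tendsto y l (𝓝[>] 0) := by
  refine tendsto_nhdsWithin_iff.2 ⟨tendsto_order.2 ⟨fun a ha => hy.mono fun i hi => ha.trans hi.1,
    fun a ha => ?_⟩, hy.mono fun i hi => hi.1⟩
  rcases le_or_gt 1 a with h1 | h1
  · exact hy.mono fun i hi => hi.2.trans_le h1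
  filter_upwards [h.eventually_lt_const (incBeta_pos hα hβ ⟨ha, h1.le⟩), hy] with i hlt hi
  by_contra! hai
  exact (incBeta_le_incBeta hα hβ ha.le hai hi.2.le).not_gt hlt

end BetaAsymptotics

section PushForward

variable {α₁ β₁ α₂ β₂ R : ℝ} {y : ℝ → ℝ}

lemma tendsto_nhdsGT_zero_of_incBeta_eq (hα₁ : 0 < α₁) (hβ₁ : 0 < β₁) (hα₂ : 0 < α₂)
    (hβ₂ : 0 < β₂) (hmaps : ∀ x ∈ Ioo (0 : ℝ) 1, y x ∈ Ioo (0 : ℝ) 1)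
    (hpush : ∀ x ∈ Ioo (0 : ℝ) 1, incBeta α₂ β₂ (y x) = R * incBeta α₁ β₁ x) :
    Tendsto y (𝓝[>] 0) (𝓝[>] 0) := by
  have hunit : Ioo (0 : ℝ) 1 ∈ 𝓝[>] 0 := Ioo_mem_nhdsGT one_pos
  refine tendsto_nhdsGT_zero_of_incBeta_comp hα₂ hβ₂ (mem_of_superset hunit hmaps) ?_
  refine Tendsto.congr' (mem_of_superset hunit fun x hx => (hpush x hx).symm) ?_
  simpa using (tendsto_incBeta_nhdsGT_zero hα₁ hβ₁).const_mul R

lemma isTheta_rpow_of_incBeta_eq (hα₁ : 0 < α₁) (hβ₁ : 0 < β₁) (hα₂ : 0 < α₂)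
    (hβ₂ : 0 < β₂) (hR : R ≠ 0) (hmaps : ∀ x ∈ Ioo (0 : ℝ) 1, y x ∈ Ioo (0 : ℝ) 1)
    (hpush : ∀ x ∈ Ioo (0 : ℝ) 1, incBeta α₂ β₂ (y x) = R * incBeta α₁ β₁ x) :
    y =Θ[𝓝[>] 0] fun x => x ^ (α₁ / α₂) := by
  have hunit : Ioo (0 : ℝ) 1 ∈ 𝓝[>] 0 := Ioo_mem_nhdsGT one_pos
  have hy := tendsto_nhdsGT_zero_of_incBeta_eq hα₁ hβ₁ hα₂ hβ₂ hmaps hpush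
  have hy₀ : ∀ᶠ x in 𝓝[>] 0, 0 < y x := mem_of_superset hunit fun x hx => (hmaps x hx).1
  have hpow : (fun x => y x ^ α₂) =Θ[𝓝[>] 0] fun x => x ^ α₁ := calc
    (fun x => y x ^ α₂) =Θ[𝓝[>] 0] fun x => incBeta α₂ β₂ (y x) :=
      ⟨(incBeta_isTheta hα₂ hβ₂).2.comp_tendsto hy, (incBeta_isTheta hα₂ hβ₂).1.comp_tendsto hy⟩
    _ =ᶠ[𝓝[>] 0] fun x => R * incBeta α₁ β₁ x := mem_of_superset hunit hpush
    _ =Θ[𝓝[>] 0] fun x => x ^ α₁ := (isTheta_const_mul_left hR).2 (incBeta_isTheta hα₁ hβ₁)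
  calc y =ᶠ[𝓝[>] 0] fun x => (y x ^ α₂) ^ α₂⁻¹ :=
        hy₀.mono fun x hx => (Real.rpow_rpow_inv hx.le hα₂.ne').symm
    _ =Θ[𝓝[>] 0] fun x => (x ^ α₁) ^ α₂⁻¹ :=
        hpow.rpow (hy₀.mono fun x hx => Real.rpow_nonneg hx.le _)
          (eventually_nhdsWithin_of_forall fun x hx => Real.rpow_nonneg (le_of_lt hx) _)
    _ =ᶠ[𝓝[>] 0] fun x => x ^ (α₁ / α₂) :=
        eventually_nhdsWithin_of_forall fun x hx => by
          simp only [← Real.rpow_mul (le_of_lt hx), div_eq_mul_inv]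

theorem tendsto_deriv_atTop_nhdsGT_zero_of_incBeta_eq (hα₁ : 0 < α₁) (hβ₁ : 0 < β₁)
    (hα₂ : 0 < α₂) (hβ₂ : 0 < β₂) (hα : α₁ < α₂) (hR : 0 < R)
    (hmaps : ∀ x ∈ Ioo (0 : ℝ) 1, y x ∈ Ioo (0 : ℝ) 1)
    (hpush : ∀ x ∈ Ioo (0 : ℝ) 1, incBeta α₂ β₂ (y x) = R * incBeta α₁ β₁ x)
    (hderiv : ∀ x ∈ Ioo (0 : ℝ) 1, deriv y x = R * betaKernel α₁ β₁ x / betaKernel α₂ β₂ (y x)) :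
    Tendsto (deriv y) (𝓝[>] 0) atTop := by
  have hunit : Ioo (0 : ℝ) 1 ∈ 𝓝[>] 0 := Ioo_mem_nhdsGT one_pos
  have hy := tendsto_nhdsGT_zero_of_incBeta_eq hα₁ hβ₁ hα₂ hβ₂ hmaps hpush
  set r := α₁ / α₂ with hr
  have hden : (fun x => betaKernel α₂ β₂ (y x)) =Θ[𝓝[>] 0] fun x => x ^ (α₁ - 1 - (r - 1)) := calc
    (fun x => betaKernel α₂ β₂ (y x)) =Θ[𝓝[>] 0] fun x => y x ^ (α₂ - 1) :=
      ⟨(betaKernel_isTheta α₂ β₂).1.comp_tendsto hy, (betaKernel_isTheta α₂ β₂).2.comp_tendsto hy⟩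
    _ =Θ[𝓝[>] 0] fun x => (x ^ r) ^ (α₂ - 1) :=
      (isTheta_rpow_of_incBeta_eq hα₁ hβ₁ hα₂ hβ₂ hR.ne' hmaps hpush).rpow
        (mem_of_superset hunit fun x hx => (hmaps x hx).1.le)
        (eventually_nhdsWithin_of_forall fun x hx => Real.rpow_nonneg (le_of_lt hx) _)
    _ =ᶠ[𝓝[>] 0] fun x => x ^ (α₁ - 1 - (r - 1)) :=
      eventually_nhdsWithin_of_forall fun x hx => by
        have hexp : r * (α₂ - 1) = α₁ - 1 - (r - 1) := by rw [hr]; field_simp; ring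
        simp only [← Real.rpow_mul (le_of_lt hx), hexp]
  have hθ : deriv y =Θ[𝓝[>] 0] fun x => x ^ (r - 1) := calc
    deriv y =ᶠ[𝓝[>] 0] fun x => R * betaKernel α₁ β₁ x / betaKernel α₂ β₂ (y x) :=
      mem_of_superset hunit hderiv
    _ =Θ[𝓝[>] 0] fun x => x ^ (α₁ - 1) / x ^ (α₁ - 1 - (r - 1)) :=
      ((isTheta_const_mul_left hR.ne').2 (betaKernel_isTheta α₁ β₁)).div hden
    _ =ᶠ[𝓝[>] 0] fun x => x ^ (r - 1) :=
      eventually_nhdsWithin_of_forall fun x hx => by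
        simp only [← Real.rpow_sub (show (0 : ℝ) < x from hx), sub_sub_cancel]
  refine tendsto_atTop_of_isBigO hθ.2 (mem_of_superset hunit fun x hx => ?_)
    (tendsto_rpow_neg_nhdsGT_zero (by linarith [(div_lt_one hα₂).2 hα]))
  show 0 ≤ deriv y x
  rw [hderiv x hx]
  exact div_nonneg (mul_nonneg hR.le (betaKernel_pos hx).le) (betaKernel_pos (hmaps x hx)).le

lemma incBeta_eq_of_one_sub (hα₁ : 0 < α₁) (hβ₁ : 0 < β₁) (hα₂ : 0 < α₂) (hβ₂ : 0 < β₂)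
    (hB : incBeta α₂ β₂ 1 = R * incBeta α₁ β₁ 1) (hmaps : ∀ x ∈ Ioo (0 : ℝ) 1, y x ∈ Ioo (0 : ℝ) 1)
    (hpush : ∀ x ∈ Ioo (0 : ℝ) 1, incBeta α₂ β₂ (y x) = R * incBeta α₁ β₁ x) {x : ℝ}
    (hx : x ∈ Ioo (0 : ℝ) 1) : incBeta β₂ α₂ (1 - y (1 - x)) = R * incBeta β₁ α₁ x := by
  have hx' : 1 - x ∈ Ioo (0 : ℝ) 1 := ⟨sub_pos.2 hx.2, sub_lt_self _ hx.1⟩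
  have h₁ := incBeta_one_sub hα₁ hβ₁ (Ioo_subset_Icc_self hx)
  rw [incBeta_one_sub hβ₂ hα₂ (Ioo_subset_Icc_self (hmaps _ hx')), incBeta_one_symm hα₂ hβ₂,
    hpush _ hx', hB, h₁]
  ring

theorem tendsto_deriv_atTop_nhdsLT_one_of_incBeta_eq (hα₁ : 0 < α₁) (hβ₁ : 0 < β₁)
    (hα₂ : 0 < α₂) (hβ₂ : 0 < β₂) (hβ : β₁ < β₂) (hR : 0 < R)
    (hB : incBeta α₂ β₂ 1 = R * incBeta α₁ β₁ 1) (hmaps : ∀ x ∈ Ioo (0 : ℝ) 1, y x ∈ Ioo (0 : ℝ) 1)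
    (hpush : ∀ x ∈ Ioo (0 : ℝ) 1, incBeta α₂ β₂ (y x) = R * incBeta α₁ β₁ x)
    (hderiv : ∀ x ∈ Ioo (0 : ℝ) 1, deriv y x = R * betaKernel α₁ β₁ x / betaKernel α₂ β₂ (y x)) :
    Tendsto (deriv y) (𝓝[<] 1) atTop := by
  have hflip : ∀ x ∈ Ioo (0 : ℝ) 1, 1 - x ∈ Ioo (0 : ℝ) 1 :=
    fun x hx => ⟨sub_pos.2 hx.2, sub_lt_self _ hx.1⟩
  have hderiv_flip (x : ℝ) : deriv (fun x => 1 - y (1 - x)) x = deriv y (1 - x) := by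
    rw [deriv_const_sub, deriv_comp_const_sub, neg_neg]
  have h := tendsto_deriv_atTop_nhdsGT_zero_of_incBeta_eq (y := fun x => 1 - y (1 - x))
    hβ₁ hα₁ hβ₂ hα₂ hβ hR
    (fun x hx => hflip _ (hmaps _ (hflip x hx)))
    (fun x hx => incBeta_eq_of_one_sub hα₁ hβ₁ hα₂ hβ₂ hB hmaps hpush hx)
    (fun x hx => by
      rw [hderiv_flip, hderiv _ (hflip x hx), betaKernel_one_sub, ← betaKernel_one_sub β₂])
  have hsub : Tendsto (fun x : ℝ => 1 - x) (𝓝[<] 1) (𝓝[>] 0) :=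
    tendsto_nhdsWithin_iff.2 ⟨by
      simpa using ((continuous_sub_left (1 : ℝ)).tendsto 1).mono_left nhdsWithin_le_nhds,
      eventually_nhdsWithin_of_forall fun x hx => show 0 < 1 - x from sub_pos.2 hx⟩
  refine (h.comp hsub).congr fun x => ?_
  simp only [Function.comp_apply, hderiv_flip, sub_sub_cancel]

end PushForward

theorem stmt_15_general (n m a₁ a₂ : ℝ) (hn : 0 < n) (hm : 0 < m)
    (ha₁ : 0 < a₁) (ha : a₁ < a₂)
    (p : ℝ → ℝ → ℝ)
    (hp : ∀ a, ∀ x, p a x = x ^ (n*a - 1) * (1 - x) ^ (m*a - 1)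
        / (∫ t in (0:ℝ)..1, t ^ (n*a - 1) * (1 - t) ^ (m*a - 1)))
    (y : ℝ → ℝ)
    (hymaps : ∀ x ∈ Set.Ioo (0:ℝ) 1, y x ∈ Set.Ioo (0:ℝ) 1)
    (hypush : ∀ x ∈ Set.Ioo (0:ℝ) 1,
        (∫ t in (0:ℝ)..(y x), p a₂ t) = ∫ t in (0:ℝ)..x, p a₁ t)
    (hyderiv : ∀ x ∈ Set.Ioo (0:ℝ) 1, deriv y x = p a₁ x / p a₂ (y x)) :
    Filter.Tendsto (deriv y) (nhdsWithin 0 (Set.Ioi 0)) Filter.atTop ∧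
    Filter.Tendsto (deriv y) (nhdsWithin 1 (Set.Iio 1)) Filter.atTop := by
  have ha₂ : 0 < a₂ := ha₁.trans ha
  have hp' (a x : ℝ) : p a x = betaKernel (n * a) (m * a) x / incBeta (n * a) (m * a) 1 := hp a x
  have hB₁ := incBeta_pos (mul_pos hn ha₁) (mul_pos hm ha₁) (right_mem_Ioc.2 one_pos)
  have hB₂ := incBeta_pos (mul_pos hn ha₂) (mul_pos hm ha₂) (right_mem_Ioc.2 one_pos)
  have hint (a s : ℝ) :
      ∫ t in (0 : ℝ)..s, p a t = incBeta (n * a) (m * a) s / incBeta (n * a) (m * a) 1 := by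
    simp only [hp', intervalIntegral.integral_div]
    rfl
  set R := incBeta (n * a₂) (m * a₂) 1 / incBeta (n * a₁) (m * a₁) 1
  have hB : incBeta (n * a₂) (m * a₂) 1 = R * incBeta (n * a₁) (m * a₁) 1 := by
    rw [div_mul_cancel₀ _ hB₁.ne']
  have hpush (x : ℝ) (hx : x ∈ Ioo (0 : ℝ) 1) :
      incBeta (n * a₂) (m * a₂) (y x) = R * incBeta (n * a₁) (m * a₁) x := by
    have h := hypush x hx
    rw [hint, hint, div_eq_div_iff hB₂.ne' hB₁.ne'] at h
    rw [div_mul_eq_mul_div, eq_div_iff hB₁.ne', h, mul_comm]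
  have hderiv (x : ℝ) (hx : x ∈ Ioo (0 : ℝ) 1) : deriv y x
      = R * betaKernel (n * a₁) (m * a₁) x / betaKernel (n * a₂) (m * a₂) (y x) := by
    rw [hyderiv x hx, hp', hp', div_div_div_eq, div_mul_eq_mul_div, mul_comm _ (incBeta _ _ 1),
      div_div]
  exact ⟨tendsto_deriv_atTop_nhdsGT_zero_of_incBeta_eq (mul_pos hn ha₁) (mul_pos hm ha₁)
      (mul_pos hn ha₂) (mul_pos hm ha₂) (by nlinarith) (div_pos hB₂ hB₁) hymaps hpush hderiv,
    tendsto_deriv_atTop_nhdsLT_one_of_incBeta_eq (mul_pos hn ha₁) (mul_pos hm ha₁)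
      (mul_pos hn ha₂) (mul_pos hm ha₂) (by nlinarith) (div_pos hB₂ hB₁) hB hymaps hpush hderiv⟩

/-- For the Beta push-forward map y with F_{a₂}(y(x)) = F_{a₁}(x), 0 < a₁ < a₂, the
derivative of y tends to +∞ at both endpoints of (0,1). -/
theorem stmt_15 (n m a₁ a₂ : ℝ) (hn : 0 < n) (hm : 0 < m)
    (ha₁ : 0 < a₁) (ha : a₁ < a₂)
    (p : ℝ → ℝ → ℝ)
    (hp : ∀ a, ∀ x, p a x = x ^ (n*a - 1) * (1 - x) ^ (m*a - 1)
        / (∫ t in (0:ℝ)..1, t ^ (n*a - 1) * (1 - t) ^ (m*a - 1)))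
    (y : ℝ → ℝ)
    (hymaps : ∀ x ∈ Set.Ioo (0:ℝ) 1, y x ∈ Set.Ioo (0:ℝ) 1)
    (hymono : StrictMonoOn y (Set.Ioo (0:ℝ) 1))
    (hydiff : ∀ x ∈ Set.Ioo (0:ℝ) 1, DifferentiableAt ℝ y x)
    (hypush : ∀ x ∈ Set.Ioo (0:ℝ) 1,
        (∫ t in (0:ℝ)..(y x), p a₂ t) = ∫ t in (0:ℝ)..x, p a₁ t)
    (hyderiv : ∀ x ∈ Set.Ioo (0:ℝ) 1, deriv y x = p a₁ x / p a₂ (y x)) :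
    Filter.Tendsto (deriv y) (nhdsWithin 0 (Set.Ioi 0)) Filter.atTop ∧
    Filter.Tendsto (deriv y) (nhdsWithin 1 (Set.Iio 1)) Filter.atTop :=
  stmt_15_general n m a₁ a₂ hn hm ha₁ ha p hp y hymaps hypush hyderiv
end

section
/- Let f, g be continuous probability densities on [0,1], positive on (0,1), whose ratio f/g is strictly convex on (0,1) with limits +∞ at both endpoints, and suppose their c.d.f.'s F, G satisfy the bunching property: there is a unique x* ∈ (0,1) with F(x*) = G(x*), F > G on (0,x*), F < G on (x*,1). Then g(x*) > f(x*) (strict inequality). -/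
/-- At the bunching point x*, the more bunched density is strictly larger: g(x*) > f(x*). -/
theorem stmt_16 (f g : ℝ → ℝ)
    (hfc : ContinuousOn f (Set.Icc 0 1)) (hgc : ContinuousOn g (Set.Icc 0 1))
    (hf1 : ∫ x in (0:ℝ)..1, f x = 1) (hg1 : ∫ x in (0:ℝ)..1, g x = 1)
    (hfpos : ∀ x ∈ Set.Ioo (0:ℝ) 1, 0 < f x)
    (hgpos : ∀ x ∈ Set.Ioo (0:ℝ) 1, 0 < g x)
    (hconv : StrictConvexOn ℝ (Set.Ioo (0:ℝ) 1) (fun x => f x / g x))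
    (hlim0 : Filter.Tendsto (fun x => f x / g x) (nhdsWithin 0 (Set.Ioi 0)) Filter.atTop)
    (hlim1 : Filter.Tendsto (fun x => f x / g x) (nhdsWithin 1 (Set.Iio 1)) Filter.atTop)
    (F G : ℝ → ℝ)
    (hF : ∀ x, F x = ∫ t in (0:ℝ)..x, f t)
    (hG : ∀ x, G x = ∫ t in (0:ℝ)..x, g t)
    (xstar : ℝ) (hx : xstar ∈ Set.Ioo (0:ℝ) 1)
    (hcross : F xstar = G xstar)
    (huniq : ∀ x ∈ Set.Ioo (0:ℝ) 1, F x = G x → x = xstar)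
    (hbelow : ∀ x ∈ Set.Ioo (0:ℝ) xstar, F x > G x)
    (habove : ∀ x ∈ Set.Ioo xstar (1:ℝ), F x < G x) :
    g xstar > f xstar := by
  obtain ⟨hx0, hx1⟩ := hx
  by_contra hcon
  push_neg at hcon
  -- hcon : g xstar ≤ f xstar
  have hfi : ∀ a b : ℝ, a ∈ Set.Icc (0:ℝ) 1 → b ∈ Set.Icc (0:ℝ) 1 →
      IntervalIntegrable f MeasureTheory.volume a b := fun a b ha hb =>
    (hfc.mono (Set.uIcc_subset_Icc ha hb)).intervalIntegrable
  have hgi : ∀ a b : ℝ, a ∈ Set.Icc (0:ℝ) 1 → b ∈ Set.Icc (0:ℝ) 1 →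
      IntervalIntegrable g MeasureTheory.volume a b := fun a b ha hb =>
    (hgc.mono (Set.uIcc_subset_Icc ha hb)).intervalIntegrable
  have hxIcc : xstar ∈ Set.Icc (0:ℝ) 1 := ⟨hx0.le, hx1.le⟩
  -- key: F b - F a = ∫ a..b f for a b in Icc 0 1
  have hFdiff : ∀ a b : ℝ, a ∈ Set.Icc (0:ℝ) 1 → b ∈ Set.Icc (0:ℝ) 1 →
      F b - F a = ∫ t in a..b, f t := by
    intro a b ha hb
    rw [hF a, hF b]
    have := intervalIntegral.integral_add_adjacent_intervals
      (hfi 0 a (Set.left_mem_Icc.2 one_pos.le) ha) (hfi a b ha hb)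
    linarith [this]
  have hGdiff : ∀ a b : ℝ, a ∈ Set.Icc (0:ℝ) 1 → b ∈ Set.Icc (0:ℝ) 1 →
      G b - G a = ∫ t in a..b, g t := by
    intro a b ha hb
    rw [hG a, hG b]
    have := intervalIntegral.integral_add_adjacent_intervals
      (hgi 0 a (Set.left_mem_Icc.2 one_pos.le) ha) (hgi a b ha hb)
    linarith [this]
  -- Step 1: ∃ y ∈ Ioo 0 xstar with f y < g y
  have step1 : ∃ y ∈ Set.Ioo (0:ℝ) xstar, f y < g y := by
    by_contra h
    push_neg at h
    set x := xstar / 2 with hxdef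
    have hxmem : x ∈ Set.Ioo (0:ℝ) xstar := ⟨by positivity, by linarith⟩
    have hxIcc' : x ∈ Set.Icc (0:ℝ) 1 := ⟨hxmem.1.le, by linarith [hxmem.2]⟩
    have hmono : ∀ t ∈ Set.Icc x xstar, g t ≤ f t := by
      intro t ht
      rcases eq_or_lt_of_le ht.2 with h1 | h1
      · rw [h1]; exact hcon
      · exact h t ⟨lt_of_lt_of_le hxmem.1 ht.1, h1⟩
    have hint : (∫ t in x..xstar, g t) ≤ ∫ t in x..xstar, f t :=
      intervalIntegral.integral_mono_on (by linarith [hxmem.2])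
        (hgi x xstar hxIcc' hxIcc) (hfi x xstar hxIcc' hxIcc) hmono
    have h1 := hFdiff x xstar hxIcc' hxIcc
    have h2 := hGdiff x xstar hxIcc' hxIcc
    have := hbelow x hxmem
    linarith
  -- Step 2: ∃ z ∈ Ioo xstar 1 with f z < g z
  have step2 : ∃ z ∈ Set.Ioo xstar (1:ℝ), f z < g z := by
    by_contra h
    push_neg at h
    set z := (xstar + 1) / 2 with hzdef
    have hzmem : z ∈ Set.Ioo xstar (1:ℝ) := ⟨by linarith, by linarith⟩
    have hzIcc : z ∈ Set.Icc (0:ℝ) 1 := ⟨by linarith [hzmem.1], hzmem.2.le⟩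
    have hmono : ∀ t ∈ Set.Icc xstar z, g t ≤ f t := by
      intro t ht
      rcases eq_or_lt_of_le ht.1 with h1 | h1
      · rw [← h1]; exact hcon
      · exact h t ⟨h1, lt_of_le_of_lt ht.2 hzmem.2⟩
    have hint : (∫ t in xstar..z, g t) ≤ ∫ t in xstar..z, f t :=
      intervalIntegral.integral_mono_on hzmem.1.le
        (hgi xstar z hxIcc hzIcc) (hfi xstar z hxIcc hzIcc) hmono
    have h1 := hFdiff xstar z hxIcc hzIcc
    have h2 := hGdiff xstar z hxIcc hzIcc
    have := habove z hzmem
    linarith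
  obtain ⟨y, hy, hyfg⟩ := step1
  obtain ⟨z, hz, hzfg⟩ := step2
  have hy1 : y ∈ Set.Ioo (0:ℝ) 1 := ⟨hy.1, lt_trans hy.2 hx1⟩
  have hz1 : z ∈ Set.Ioo (0:ℝ) 1 := ⟨lt_trans hx0 hz.1, hz.2⟩
  have hry : f y / g y < 1 := (div_lt_one (hgpos y hy1)).2 hyfg
  have hrz : f z / g z < 1 := (div_lt_one (hgpos z hz1)).2 hzfg
  have hrx : 1 ≤ f xstar / g xstar := (one_le_div (hgpos xstar ⟨hx0, hx1⟩)).2 hcon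
  have hyz : y < z := lt_trans hy.2 hz.1
  set t : ℝ := (z - xstar) / (z - y) with htdef
  have hzy : (0:ℝ) < z - y := by linarith
  have ht0 : 0 < t := div_pos (by linarith [hz.1]) hzy
  have ht1 : t < 1 := (div_lt_one hzy).2 (by linarith [hy.2])
  have hsum : t + (1 - t) = 1 := by ring
  have hcomb : t • y + (1 - t) • z = xstar := by
    rw [smul_eq_mul, smul_eq_mul, htdef]
    field_simp
    ring
  have hne : y ≠ z := ne_of_lt hyz
  have := hconv.2 hy1 hz1 hne ht0 (by linarith) hsum
  rw [hcomb] at this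
  rw [smul_eq_mul, smul_eq_mul] at this
  nlinarith
end

section
/- Let X and Y be integrable real random variables with densities f and g such that f - g changes sign at most twice on ℝ with sign sequence starting with −. Then X ≥_icv Y if and only if E[X] ≥ E[Y]. -/
open MeasureTheory

/-- If the densities f of X and g of Y satisfy: f - g has at most two sign changes with sign
sequence starting with −, then X ≥_icv Y iff E[X] ≥ E[Y]. -/
theorem stmt_18 (f g : ℝ → ℝ)
    (hf0 : ∀ x, 0 ≤ f x) (hg0 : ∀ x, 0 ≤ g x)
    (hfm : Measurable f) (hgm : Measurable g)
    (hf1 : ∫ x, f x = 1) (hg1 : ∫ x, g x = 1)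
    (hfmean : Integrable (fun x => x * f x)) (hgmean : Integrable (fun x => x * g x))
    (hsign : ∃ c d : ℝ, c ≤ d ∧
      (∀ x < c, f x - g x ≤ 0) ∧
      (∀ x ∈ Set.Ioo c d, 0 ≤ f x - g x) ∧
      (∀ x, d < x → f x - g x ≤ 0)) :
    ((∀ φ : ℝ → ℝ, Monotone φ → ConcaveOn ℝ Set.univ φ →
        Integrable (fun x => φ x * f x) → Integrable (fun x => φ x * g x) →
        (∫ x, φ x * f x) ≥ ∫ x, φ x * g x) ↔
      (∫ x, x * f x) ≥ ∫ x, x * g x) := by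
  obtain ⟨c, d, hcd, h1, h2, h3⟩ := hsign
  have hfi : Integrable f := by
    by_contra h
    rw [integral_undef h] at hf1
    norm_num at hf1
  have hgi : Integrable g := by
    by_contra h
    rw [integral_undef h] at hg1
    norm_num at hg1
  constructor
  · intro h
    have := h id monotone_id (concaveOn_id convex_univ) hfmean hgmean
    simpa [id] using this
  · intro hmean φ hφmono hφconc hφf hφg
    rcases eq_or_lt_of_le hcd with rfl | hlt
    · -- c = d : f = g a.e.
      have hc : ∀ᵐ x : ℝ, x ≠ c := by
        rw [ae_iff]
        simp only [ne_eq, not_not, Set.setOf_eq_eq_singleton]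
        exact Real.volume_singleton
      have hle : ∀ᵐ x : ℝ, f x ≤ g x := by
        filter_upwards [hc] with x hx
        rcases lt_or_gt_of_ne hx with hxc | hxc
        · linarith [h1 x hxc]
        · linarith [h3 x hxc]
      have hsub : Integrable (fun x => g x - f x) := hgi.sub hfi
      have hz : (∫ x, (g x - f x)) = 0 := by
        rw [integral_sub hgi hfi, hf1, hg1]; ring
      have hfg : (fun x => g x - f x) =ᵐ[volume] 0 := by
        rw [← integral_eq_zero_iff_of_nonneg_ae ?_ hsub]
        · exact hz
        · filter_upwards [hle] with x hx
          simpa using hx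
      have : (∫ x, φ x * f x) = ∫ x, φ x * g x := by
        apply integral_congr_ae
        filter_upwards [hfg] with x hx
        have : g x = f x := by simpa [sub_eq_zero] using hx
        rw [this]
      linarith [this]
    · -- c < d
      set a : ℝ := (φ d - φ c) / (d - c) with ha_def
      have hdc : (0:ℝ) < d - c := by linarith
      have ha : 0 ≤ a := div_nonneg (by linarith [hφmono hcd]) hdc.le
      set ℓ : ℝ → ℝ := fun x => φ c + a * (x - c) with hℓ_def
      have hA : a * (d - c) = φ d - φ c := by
        rw [ha_def]; field_simp
      -- chord inequalities
      have hbelow_left : ∀ x, x < c → φ x ≤ ℓ x := by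
        intro x hx
        have hs := hφconc.slope_anti_adjacent (Set.mem_univ x) (Set.mem_univ d) hx hlt
        have hcx : (0:ℝ) < c - x := by linarith
        rw [div_le_div_iff₀ hdc hcx] at hs
        have h3' : a * (x - c) * (d - c) = (φ d - φ c) * (x - c) := by
          rw [← hA]; ring
        have h4 : φ x * (d - c) ≤ (φ c + a * (x - c)) * (d - c) := by nlinarith [hs, h3']
        simp only [hℓ_def]
        exact le_of_mul_le_mul_right h4 hdc
      have habove : ∀ x, c < x → x < d → ℓ x ≤ φ x := by
        intro x hcx hxd
        have hs := hφconc.slope_anti_adjacent (Set.mem_univ c) (Set.mem_univ d) hcx hxd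
        have hx1 : (0:ℝ) < x - c := by linarith
        have hx2 : (0:ℝ) < d - x := by linarith
        rw [div_le_div_iff₀ hx2 hx1] at hs
        have h3' : a * (x - c) * (d - c) = (φ d - φ c) * (x - c) := by
          rw [← hA]; ring
        have h4 : (φ c + a * (x - c)) * (d - c) ≤ φ x * (d - c) := by nlinarith [hs, h3']
        simp only [hℓ_def]
        exact le_of_mul_le_mul_right h4 hdc
      have hbelow_right : ∀ x, d < x → φ x ≤ ℓ x := by
        intro x hx
        have hs := hφconc.slope_anti_adjacent (Set.mem_univ c) (Set.mem_univ x) hlt hx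
        have hxd : (0:ℝ) < x - d := by linarith
        rw [div_le_div_iff₀ hxd hdc] at hs
        have h3' : a * (x - c) * (d - c) = (φ d - φ c) * (x - c) := by
          rw [← hA]; ring
        have h4 : φ x * (d - c) ≤ (φ c + a * (x - c)) * (d - c) := by nlinarith [hs, h3']
        simp only [hℓ_def]
        exact le_of_mul_le_mul_right h4 hdc
      -- pointwise nonnegativity
      have key : ∀ x, 0 ≤ (φ x - ℓ x) * (f x - g x) := by
        intro x
        rcases lt_trichotomy x c with hx | rfl | hx
        · nlinarith [hbelow_left x hx, h1 x hx]
        · have hz : φ x - ℓ x = 0 := by simp [hℓ_def]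
          rw [hz, zero_mul]
        rcases lt_trichotomy x d with hxd | rfl | hxd
        · exact mul_nonneg (by linarith [habove x hx hxd]) (h2 x ⟨hx, hxd⟩)
        · have hz : φ x - ℓ x = 0 := by
            simp only [hℓ_def]; linarith [hA]
          rw [hz, zero_mul]
        · nlinarith [hbelow_right x hxd, h3 x hxd]
      -- integral computation
      set k : ℝ := φ c - a * c with hk_def
      have hdecomp : ∀ x, (φ x - ℓ x) * (f x - g x) =
          (φ x * f x - φ x * g x) + (a * (x * g x) - a * (x * f x)) + (k * g x - k * f x) := by
        intro x
        simp only [hℓ_def, hk_def]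
        ring
      have hI1 : Integrable (fun x => φ x * f x - φ x * g x) := hφf.sub hφg
      have hI2 : Integrable (fun x => a * (x * g x) - a * (x * f x)) :=
        (hgmean.const_mul a).sub (hfmean.const_mul a)
      have hI3 : Integrable (fun x => k * g x - k * f x) :=
        (hgi.const_mul k).sub (hfi.const_mul k)
      have e1 : ∫ x, (φ x * f x - φ x * g x) = (∫ x, φ x * f x) - ∫ x, φ x * g x :=
        integral_sub hφf hφg
      have e2 : ∫ x, (a * (x * g x) - a * (x * f x))
          = a * (∫ x, x * g x) - a * ∫ x, x * f x := by
        rw [integral_sub (hgmean.const_mul a) (hfmean.const_mul a), integral_const_mul,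
          integral_const_mul]
      have e3 : ∫ x, (k * g x - k * f x) = k * (∫ x, g x) - k * ∫ x, f x := by
        rw [integral_sub (hgi.const_mul k) (hfi.const_mul k), integral_const_mul,
          integral_const_mul]
      have hsum : 0 ≤ (∫ x, (φ x * f x - φ x * g x))
          + (∫ x, (a * (x * g x) - a * (x * f x))) + ∫ x, (k * g x - k * f x) := by
        have hI12 : Integrable (fun x => (φ x * f x - φ x * g x)
            + (a * (x * g x) - a * (x * f x))) := hI1.add hI2
        rw [← integral_add hI1 hI2, ← integral_add hI12 hI3]
        apply integral_nonneg
        intro x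
        have h := key x
        rw [hdecomp x] at h
        simpa using h
      rw [e1, e2, e3, hf1, hg1] at hsum
      have hm : 0 ≤ a * ((∫ x, x * f x) - ∫ x, x * g x) :=
        mul_nonneg ha (by linarith)
      nlinarith [hsum, hm]
end
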